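/- A sequent Γ ⊢ Δ is provable in the sequent calculus of binding logic if and only if the pre-cooked sequent Γ' ⊢ Δ' is provable in sequent calculus modulo the congruence generated by the rewrite system σ. -/

import Mathlib

/- ## Binding logic: syntax and sequent calculus -/

/-- A binding-logic language: function and predicate symbols with binding arities. -/
structure BSig where
  Fn : Type
  Pr : Type
  /-- binding arity of a function symbol -/
  far : Fn → List ℕ
  /-- binding arity of a predicate symbol -/
  par : Pr → List ℕ

/-- Terms of binding logic (α-equivalence classes, in locally nameless / de Bruijn style):
`bvar i` is a variable bound by a binder of a function symbol or by a quantifier,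
`fvar x` is a named free variable.  In `app f a`, the `i`-th argument `a i` is a term
in which `(S.far f).get i` additional variables (de Bruijn indices `0, …, kᵢ - 1`) are bound. -/
inductive Tm (S : BSig) : Type
  | bvar : ℕ → Tm S
  | fvar : ℕ → Tm S
  | app : (f : S.Fn) → (Fin (S.far f).length → Tm S) → Tm S

variable {S : BSig}

/-- `Tm.WF p t`: all de Bruijn variables of `t` are bound among the `p` ambient binders;
a *term of the language* (over named free variables) at binder depth `p`. -/
def Tm.WF : ℕ → Tm S → Prop
  | p, .bvar i => i < p
  | _, .fvar _ => True
  | p, .app f a => ∀ i, Tm.WF (p + (S.far f).get i) (a i)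

/-- Capture-avoiding substitution of the term `u` for the free variable `x`. -/
def Tm.subst (x : ℕ) (u : Tm S) : Tm S → Tm S
  | .bvar i => .bvar i
  | .fvar y => if y = x then u else .fvar y
  | .app f a => .app f (fun i => Tm.subst x u (a i))

/-- Instantiation of the bound variable `k` by the (locally closed) term `u`. -/
def Tm.openT (u : Tm S) : ℕ → Tm S → Tm S
  | k, .bvar i => if i = k then u else .bvar i
  | _, .fvar y => .fvar y
  | k, .app f a => .app f (fun i => Tm.openT u (k + (S.far f).get i) (a i))

/-- Free (named) variables of a term. -/
def Tm.fv : Tm S → Set ℕ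
  | .bvar _ => ∅
  | .fvar x => {x}
  | .app _ a => ⋃ i, (a i).fv

/-- Propositions of binding logic.  In `atom P a`, the `i`-th argument binds
`(S.par P).get i` variables; quantifiers bind one de Bruijn variable. -/
inductive Fm (S : BSig) : Type
  | atom : (P : S.Pr) → (Fin (S.par P).length → Tm S) → Fm S
  | imp : Fm S → Fm S → Fm S
  | conj : Fm S → Fm S → Fm S
  | disj : Fm S → Fm S → Fm S
  | bot : Fm S
  | all : Fm S → Fm S
  | ex : Fm S → Fm S

/-- `Fm.WF q A`: well-formedness of `A` under `q` ambient quantifiers. -/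
def Fm.WF : ℕ → Fm S → Prop
  | q, .atom P a => ∀ i, Tm.WF (q + (S.par P).get i) (a i)
  | q, .imp A B => Fm.WF q A ∧ Fm.WF q B
  | q, .conj A B => Fm.WF q A ∧ Fm.WF q B
  | q, .disj A B => Fm.WF q A ∧ Fm.WF q B
  | _, .bot => True
  | q, .all A => Fm.WF (q + 1) A
  | q, .ex A => Fm.WF (q + 1) A

/-- Free (named) variables of a proposition. -/
def Fm.fv : Fm S → Set ℕ
  | .atom _ a => ⋃ i, (a i).fv
  | .imp A B => A.fv ∪ B.fv
  | .conj A B => A.fv ∪ B.fv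
  | .disj A B => A.fv ∪ B.fv
  | .bot => ∅
  | .all A => A.fv
  | .ex A => A.fv

/-- Instantiation of the quantifier-bound variable `k` of a proposition by a term. -/
def Fm.openF (u : Tm S) : ℕ → Fm S → Fm S
  | k, .atom P a => .atom P (fun i => Tm.openT u (k + (S.par P).get i) (a i))
  | k, .imp A B => .imp (Fm.openF u k A) (Fm.openF u k B)
  | k, .conj A B => .conj (Fm.openF u k A) (Fm.openF u k B)
  | k, .disj A B => .disj (Fm.openF u k A) (Fm.openF u k B)
  | _, .bot => .bot
  | k, .all A => .all (Fm.openF u (k + 1) A)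
  | k, .ex A => .ex (Fm.openF u (k + 1) A)

/-- Capture-avoiding substitution of a term for a free variable in a proposition. -/
def Fm.subst (x : ℕ) (u : Tm S) : Fm S → Fm S
  | .atom P a => .atom P (fun i => Tm.subst x u (a i))
  | .imp A B => .imp (Fm.subst x u A) (Fm.subst x u B)
  | .conj A B => .conj (Fm.subst x u A) (Fm.subst x u B)
  | .disj A B => .disj (Fm.subst x u A) (Fm.subst x u B)
  | .bot => .bot
  | .all A => .all (Fm.subst x u A)
  | .ex A => .ex (Fm.subst x u A)

/-- Free variables of a multiset of propositions. -/
def mFv (Γ : Multiset (Fm S)) : Set ℕ := {x | ∃ A ∈ Γ, x ∈ A.fv}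

/-- The sequent calculus of binding logic: exactly the standard rules of classical
sequent calculus, with capture-avoiding substitution in the quantifier rules. -/
inductive Deriv (S : BSig) : Multiset (Fm S) → Multiset (Fm S) → Prop
  | ax (A : Fm S) : Deriv S {A} {A}
  | cut {Γ Δ : Multiset (Fm S)} {A : Fm S} :
      Deriv S (A ::ₘ Γ) Δ → Deriv S Γ (A ::ₘ Δ) → Deriv S Γ Δ
  | contrL {Γ Δ} {A : Fm S} : Deriv S (A ::ₘ A ::ₘ Γ) Δ → Deriv S (A ::ₘ Γ) Δ
  | contrR {Γ Δ} {A : Fm S} : Deriv S Γ (A ::ₘ A ::ₘ Δ) → Deriv S Γ (A ::ₘ Δ)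
  | weakL {Γ Δ} {A : Fm S} : Deriv S Γ Δ → Deriv S (A ::ₘ Γ) Δ
  | weakR {Γ Δ} {A : Fm S} : Deriv S Γ Δ → Deriv S Γ (A ::ₘ Δ)
  | impL {Γ Δ} {A B : Fm S} :
      Deriv S Γ (A ::ₘ Δ) → Deriv S (B ::ₘ Γ) Δ → Deriv S ((Fm.imp A B) ::ₘ Γ) Δ
  | impR {Γ Δ} {A B : Fm S} :
      Deriv S (A ::ₘ Γ) (B ::ₘ Δ) → Deriv S Γ ((Fm.imp A B) ::ₘ Δ)
  | conjL {Γ Δ} {A B : Fm S} :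
      Deriv S (A ::ₘ B ::ₘ Γ) Δ → Deriv S ((Fm.conj A B) ::ₘ Γ) Δ
  | conjR {Γ Δ} {A B : Fm S} :
      Deriv S Γ (A ::ₘ Δ) → Deriv S Γ (B ::ₘ Δ) → Deriv S Γ ((Fm.conj A B) ::ₘ Δ)
  | disjL {Γ Δ} {A B : Fm S} :
      Deriv S (A ::ₘ Γ) Δ → Deriv S (B ::ₘ Γ) Δ → Deriv S ((Fm.disj A B) ::ₘ Γ) Δ
  | disjR {Γ Δ} {A B : Fm S} :
      Deriv S Γ (A ::ₘ B ::ₘ Δ) → Deriv S Γ ((Fm.disj A B) ::ₘ Δ)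
  | botL {Γ Δ} : Deriv S ((Fm.bot) ::ₘ Γ) Δ
  | allL {Γ Δ} {A : Fm S} {t : Tm S} : Tm.WF 0 t →
      Deriv S ((Fm.openF t 0 A) ::ₘ Γ) Δ → Deriv S ((Fm.all A) ::ₘ Γ) Δ
  | allR {Γ Δ} {A : Fm S} {x : ℕ} :
      x ∉ mFv Γ → x ∉ mFv Δ → x ∉ A.fv →
      Deriv S Γ ((Fm.openF (Tm.fvar x) 0 A) ::ₘ Δ) → Deriv S Γ ((Fm.all A) ::ₘ Δ)
  | exL {Γ Δ} {A : Fm S} {x : ℕ} :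
      x ∉ mFv Γ → x ∉ mFv Δ → x ∉ A.fv →
      Deriv S ((Fm.openF (Tm.fvar x) 0 A) ::ₘ Γ) Δ → Deriv S ((Fm.ex A) ::ₘ Γ) Δ
  | exR {Γ Δ} {A : Fm S} {t : Tm S} : Tm.WF 0 t →
      Deriv S Γ ((Fm.openF t 0 A) ::ₘ Δ) → Deriv S Γ ((Fm.ex A) ::ₘ Δ)
/- ## The translated language L' : explicit substitutions and de Bruijn indices -/

/-- Sorts of `L'`: `tm n` for terms in a context of `n` bound variables, and
`sb n p` for explicit substitutions mapping `p` variables to terms of sort `n`. -/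
inductive Srt : Type
  | tm : ℕ → Srt
  | sb : ℕ → ℕ → Srt
deriving DecidableEq

/-- Terms of `L'`.  `evar x s` is a named variable of sort `s`; `qvar i` is a
(formula-level) de Bruijn variable bound by a quantifier; `idx i n` is the de Bruijn
constant `iₙ` (`1 ≤ i ≤ n`); `fa f p a` is `fₚ(a)`; `sub t s` is `t[s]`;
`eid n`, `cons`, `up n`, `comp` are `idₙ`, cons `.`, `↑ₙ` and composition `∘`. -/
inductive ETm (S : BSig) : Type
  | evar : ℕ → Srt → ETm S
  | qvar : ℕ → ETm S
  | idx : ℕ → ℕ → ETm S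
  | fa : (f : S.Fn) → ℕ → (Fin (S.far f).length → ETm S) → ETm S
  | sub : ETm S → ETm S → ETm S
  | eid : ℕ → ETm S
  | cons : ETm S → ETm S → ETm S
  | up : ℕ → ETm S
  | comp : ETm S → ETm S → ETm S

variable {S : BSig}

/-- The iterated shift `↑^k` out of context `p`:
`↑_p ∘ (↑_{p+1} ∘ ⋯ ∘ ↑_{p+k-1})`, of sort `⟨p+k, p⟩` (`id_p` for `k = 0`). -/
def upChain (S : BSig) (p : ℕ) : ℕ → ETm S
  | 0 => .eid p
  | 1 => .up p
  | k + 2 => .comp (.up p) (upChain S (p + 1) (k + 1))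

/-- Sorting judgment for `L'`; `Θ` gives the sorts of the quantifier-bound variables. -/
inductive HasSort : List Srt → ETm S → Srt → Prop
  | evar {Θ x s} : HasSort Θ (.evar x s) s
  | qvar {Θ i s} : Θ[i]? = some s → HasSort Θ (.qvar i) s
  | idx {Θ i n} : 1 ≤ i → i ≤ n → HasSort Θ (.idx i n) (.tm n)
  | fa {Θ} {f : S.Fn} {p : ℕ} {a : Fin (S.far f).length → ETm S} :
      (∀ j, HasSort Θ (a j) (.tm (p + (S.far f).get j))) →
      HasSort Θ (.fa f p a) (.tm p)
  | sub {Θ t s n p} : HasSort Θ t (.tm p) → HasSort Θ s (.sb n p) →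
      HasSort Θ (.sub t s) (.tm n)
  | eid {Θ n} : HasSort Θ (.eid n) (.sb n n)
  | cons {Θ t s n p} : HasSort Θ t (.tm n) → HasSort Θ s (.sb n p) →
      HasSort Θ (.cons t s) (.sb n (p + 1))
  | up {Θ n} : HasSort Θ (.up n) (.sb (n + 1) n)
  | comp {Θ s₁ s₂ n p q} : HasSort Θ s₁ (.sb p n) → HasSort Θ s₂ (.sb q p) →
      HasSort Θ (.comp s₁ s₂) (.sb q n)

/-- The component `1[↑^j]` (of sort `q+k`, with `1` of sort `q+k-j`). -/
def shiftOne (S : BSig) (q k j : ℕ) : ETm S :=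
  if j = 0 then .idx 1 (q + k) else .sub (.idx 1 (q + k - j)) (upChain S (q + k - j) j)

/-- Auxiliary: builds `1[↑^j]. … .1[↑^{k-1}].(s ∘ ↑^k)`. -/
def liftAux (S : BSig) (q k : ℕ) (s : ETm S) : ℕ → ℕ → ETm S
  | 0, _ => .comp s (upChain S q k)
  | m + 1, j => .cons (shiftOne S q k j) (liftAux S q k s m (j + 1))

/-- The substitution `1.1[↑].….1[↑^{k−1}].(s ∘ ↑^k)` of sort `⟨q+k, p+k⟩`,
for `s` of sort `⟨q,p⟩` (just `s` when `k = 0`). -/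
def liftSub (S : BSig) (q k : ℕ) (s : ETm S) : ETm S :=
  match k with
  | 0 => s
  | k' + 1 => liftAux S q (k' + 1) s (k' + 1) 0

/-- One step of `σ`-rewriting (at the root or in any subterm). -/
inductive Rw : ETm S → ETm S → Prop
  -- the rule n+1 → 1[↑ⁿ]
  | ridx {i n : ℕ} : 1 ≤ i → i + 1 ≤ n →
      Rw (.idx (i + 1) n) (.sub (.idx 1 (n - i)) (upChain S (n - i) i))
  -- 1[t.s] → t
  | rhead {m : ℕ} {t s : ETm S} : Rw (.sub (.idx 1 m) (.cons t s)) t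
  -- t[id] → t
  | rtid {n : ℕ} {t : ETm S} : Rw (.sub t (.eid n)) t
  -- (t[s])[s'] → t[s ∘ s']
  | rclos {t s s' : ETm S} : Rw (.sub (.sub t s) s') (.sub t (.comp s s'))
  -- id ∘ s → s
  | ridl {n : ℕ} {s : ETm S} : Rw (.comp (.eid n) s) s
  -- ↑ ∘ (t.s) → s
  | rshcons {n : ℕ} {t s : ETm S} : Rw (.comp (.up n) (.cons t s)) s
  -- (s₁ ∘ s₂) ∘ s₃ → s₁ ∘ (s₂ ∘ s₃)
  | rassoc {s₁ s₂ s₃ : ETm S} : Rw (.comp (.comp s₁ s₂) s₃) (.comp s₁ (.comp s₂ s₃))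
  -- (t.s) ∘ s' → t[s'].(s ∘ s')
  | rmap {t s s' : ETm S} : Rw (.comp (.cons t s) s') (.cons (.sub t s') (.comp s s'))
  -- s ∘ id → s
  | ridr {n : ℕ} {s : ETm S} : Rw (.comp s (.eid n)) s
  -- 1.↑ → id
  | rvarsh {n : ℕ} : Rw (.cons (.idx 1 (n + 1)) (.up n)) (.eid (n + 1))
  -- 1[s].(↑ ∘ s) → s
  | rscons {m n : ℕ} {s : ETm S} : Rw (.cons (.sub (.idx 1 m) s) (.comp (.up n) s)) s
  -- fₚ(t₁,…,tₙ)[s] → f_q(t₁[1.1[↑].….1[↑^{k₁−1}].s∘↑^{k₁}], …) for s of sort ⟨q,p⟩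
  | rfa {f : S.Fn} {p q : ℕ} {a : Fin (S.far f).length → ETm S} {s : ETm S} :
      (∃ Θ, HasSort Θ s (.sb q p)) →
      Rw (.sub (.fa f p a) s)
         (.fa f q (fun i => .sub (a i) (liftSub S q ((S.far f).get i) s)))
  -- congruence: rewriting in subterms
  | cfa {f : S.Fn} {p : ℕ} {a : Fin (S.far f).length → ETm S}
      {i : Fin (S.far f).length} {t' : ETm S} :
      Rw (a i) t' → Rw (.fa f p a) (.fa f p (Function.update a i t'))
  | csub₁ {t t' s : ETm S} : Rw t t' → Rw (.sub t s) (.sub t' s)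
  | csub₂ {t s s' : ETm S} : Rw s s' → Rw (.sub t s) (.sub t s')
  | ccons₁ {t t' s : ETm S} : Rw t t' → Rw (.cons t s) (.cons t' s)
  | ccons₂ {t s s' : ETm S} : Rw s s' → Rw (.cons t s) (.cons t s')
  | ccomp₁ {t t' s : ETm S} : Rw t t' → Rw (.comp t s) (.comp t' s)
  | ccomp₂ {t s s' : ETm S} : Rw s s' → Rw (.comp t s) (.comp t s')

/-- The congruence `≡` on terms of `L'` generated by the rewrite system `σ`. -/
def TmConv (S : BSig) : ETm S → ETm S → Prop := Relation.EqvGen Rw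

/-- A term is `σ`-normal if no rewrite step applies to it. -/
def ENormal (t : ETm S) : Prop := ∀ u, ¬ Rw t u

/-- Propositions of `L'` (quantifiers bind one variable of the indicated sort,
represented by formula-level de Bruijn indices `qvar`). -/
inductive EFm (S : BSig) : Type
  | atom : (P : S.Pr) → (Fin (S.par P).length → ETm S) → EFm S
  | imp : EFm S → EFm S → EFm S
  | conj : EFm S → EFm S → EFm S
  | disj : EFm S → EFm S → EFm S
  | bot : EFm S
  | all : Srt → EFm S → EFm S
  | ex : Srt → EFm S → EFm S

/-- Replacement of the quantifier-bound variable `k` by a term (in a term of `L'`). -/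
def ETm.openE (u : ETm S) (k : ℕ) : ETm S → ETm S
  | .qvar i => if i = k then u else .qvar i
  | .evar x s => .evar x s
  | .idx i n => .idx i n
  | .fa f p a => .fa f p (fun j => ETm.openE u k (a j))
  | .sub t s => .sub (ETm.openE u k t) (ETm.openE u k s)
  | .eid n => .eid n
  | .cons t s => .cons (ETm.openE u k t) (ETm.openE u k s)
  | .up n => .up n
  | .comp t s => .comp (ETm.openE u k t) (ETm.openE u k s)

/-- Instantiation of the quantifier-bound variable `k` of a proposition of `L'`. -/
def EFm.openF (u : ETm S) : ℕ → EFm S → EFm S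
  | k, .atom P a => .atom P (fun i => ETm.openE u k (a i))
  | k, .imp A B => .imp (EFm.openF u k A) (EFm.openF u k B)
  | k, .conj A B => .conj (EFm.openF u k A) (EFm.openF u k B)
  | k, .disj A B => .disj (EFm.openF u k A) (EFm.openF u k B)
  | _, .bot => .bot
  | k, .all s A => .all s (EFm.openF u (k + 1) A)
  | k, .ex s A => .ex s (EFm.openF u (k + 1) A)

/-- Names of the free named variables of a term of `L'`. -/
def ETm.fvs : ETm S → Set ℕ
  | .evar x _ => {x}
  | .qvar _ => ∅
  | .idx _ _ => ∅
  | .fa _ _ a => ⋃ i, (a i).fvs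
  | .sub t s => t.fvs ∪ s.fvs
  | .eid _ => ∅
  | .cons t s => t.fvs ∪ s.fvs
  | .up _ => ∅
  | .comp t s => t.fvs ∪ s.fvs

/-- Names of the free named variables of a proposition of `L'`. -/
def EFm.fvs : EFm S → Set ℕ
  | .atom _ a => ⋃ i, (a i).fvs
  | .imp A B => A.fvs ∪ B.fvs
  | .conj A B => A.fvs ∪ B.fvs
  | .disj A B => A.fvs ∪ B.fvs
  | .bot => ∅
  | .all _ A => A.fvs
  | .ex _ A => A.fvs

/-- Free variables of a multiset of `L'`-propositions. -/
def mFvE (Γ : Multiset (EFm S)) : Set ℕ := {x | ∃ A ∈ Γ, x ∈ A.fvs}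

/-- The congruence on propositions of `L'` generated by `σ`
(congruent atoms have `≡`-congruent arguments). -/
inductive FConv : EFm S → EFm S → Prop
  | atom {P : S.Pr} {a b : Fin (S.par P).length → ETm S} :
      (∀ i, TmConv S (a i) (b i)) → FConv (.atom P a) (.atom P b)
  | imp {A A' B B'} : FConv A A' → FConv B B' → FConv (.imp A B) (.imp A' B')
  | conj {A A' B B'} : FConv A A' → FConv B B' → FConv (.conj A B) (.conj A' B')
  | disj {A A' B B'} : FConv A A' → FConv B B' → FConv (.disj A B) (.disj A' B')
  | bot : FConv .bot .bot
  | all {s A A'} : FConv A A' → FConv (.all s A) (.all s A')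
  | ex {s A A'} : FConv A A' → FConv (.ex s A) (.ex s A')

/-- Sequent calculus modulo a congruence `E`, with proof length recorded:
the standard classical rules, where principal formulas need only be congruent
to the displayed shape.  `DerivM E n Γ Δ` : `Γ ⊢ Δ` has a proof of length `n`. -/
inductive DerivM (E : EFm S → EFm S → Prop) : ℕ → Multiset (EFm S) → Multiset (EFm S) → Prop
  | ax {A B : EFm S} : E A B → DerivM E 1 {A} {B}
  | cut {m n Γ Δ} {A B : EFm S} : E A B →
      DerivM E m (A ::ₘ Γ) Δ → DerivM E n Γ (B ::ₘ Δ) → DerivM E (m + n + 1) Γ Δ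
  | contrL {m Γ Δ} {A B₁ B₂ : EFm S} : E A B₁ → E A B₂ →
      DerivM E m (B₁ ::ₘ B₂ ::ₘ Γ) Δ → DerivM E (m + 1) (A ::ₘ Γ) Δ
  | contrR {m Γ Δ} {A B₁ B₂ : EFm S} : E A B₁ → E A B₂ →
      DerivM E m Γ (B₁ ::ₘ B₂ ::ₘ Δ) → DerivM E (m + 1) Γ (A ::ₘ Δ)
  | weakL {m Γ Δ} {A : EFm S} : DerivM E m Γ Δ → DerivM E (m + 1) (A ::ₘ Γ) Δ
  | weakR {m Γ Δ} {A : EFm S} : DerivM E m Γ Δ → DerivM E (m + 1) Γ (A ::ₘ Δ)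
  | impL {m n Γ Δ} {C A B : EFm S} : E C (.imp A B) →
      DerivM E m Γ (A ::ₘ Δ) → DerivM E n (B ::ₘ Γ) Δ → DerivM E (m + n + 1) (C ::ₘ Γ) Δ
  | impR {m Γ Δ} {C A B : EFm S} : E C (.imp A B) →
      DerivM E m (A ::ₘ Γ) (B ::ₘ Δ) → DerivM E (m + 1) Γ (C ::ₘ Δ)
  | conjL {m Γ Δ} {C A B : EFm S} : E C (.conj A B) →
      DerivM E m (A ::ₘ B ::ₘ Γ) Δ → DerivM E (m + 1) (C ::ₘ Γ) Δ
  | conjR {m n Γ Δ} {C A B : EFm S} : E C (.conj A B) →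
      DerivM E m Γ (A ::ₘ Δ) → DerivM E n Γ (B ::ₘ Δ) → DerivM E (m + n + 1) Γ (C ::ₘ Δ)
  | disjL {m n Γ Δ} {C A B : EFm S} : E C (.disj A B) →
      DerivM E m (A ::ₘ Γ) Δ → DerivM E n (B ::ₘ Γ) Δ → DerivM E (m + n + 1) (C ::ₘ Γ) Δ
  | disjR {m Γ Δ} {C A B : EFm S} : E C (.disj A B) →
      DerivM E m Γ (A ::ₘ B ::ₘ Δ) → DerivM E (m + 1) Γ (C ::ₘ Δ)
  | botL {Γ Δ} {A : EFm S} : E A .bot → DerivM E 1 (A ::ₘ Γ) Δ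
  | allL {m Γ Δ} {B C A : EFm S} {s : Srt} {t : ETm S} :
      E B (.all s A) → E C (EFm.openF t 0 A) → HasSort [] t s →
      DerivM E m (C ::ₘ Γ) Δ → DerivM E (m + 1) (B ::ₘ Γ) Δ
  | allR {m Γ Δ} {B A : EFm S} {s : Srt} {x : ℕ} :
      E B (.all s A) → x ∉ mFvE Γ → x ∉ mFvE Δ → x ∉ A.fvs →
      DerivM E m Γ ((EFm.openF (.evar x s) 0 A) ::ₘ Δ) → DerivM E (m + 1) Γ (B ::ₘ Δ)
  | exL {m Γ Δ} {B A : EFm S} {s : Srt} {x : ℕ} :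
      E B (.ex s A) → x ∉ mFvE Γ → x ∉ mFvE Δ → x ∉ A.fvs →
      DerivM E m ((EFm.openF (.evar x s) 0 A) ::ₘ Γ) Δ → DerivM E (m + 1) (B ::ₘ Γ) Δ
  | exR {m Γ Δ} {B C A : EFm S} {s : Srt} {t : ETm S} :
      E B (.ex s A) → E C (EFm.openF t 0 A) → HasSort [] t s →
      DerivM E m Γ (C ::ₘ Δ) → DerivM E (m + 1) Γ (B ::ₘ Δ)

/-- Provability in sequent calculus modulo the congruence `E`. -/
def DerivMod (E : EFm S → EFm S → Prop) (Γ Δ : Multiset (EFm S)) : Prop :=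
  ∃ n, DerivM E n Γ Δ

/- ## Pre-cooking : the translation from L to L' -/

/-- Pre-cooking of a term at binder depth `p` (the length of the list `l` of
bound variables): binder-bound variables become de Bruijn constants, other
variables are protected by the shift `↑^p`. -/
def Ft (S : BSig) : (p : ℕ) → Tm S → ETm S
  | p, .bvar i =>
      if i < p then .idx (i + 1) p
      else if p = 0 then .qvar (i - p) else .sub (.qvar (i - p)) (upChain S 0 p)
  | p, .fvar x =>
      if p = 0 then .evar x (.tm 0) else .sub (.evar x (.tm 0)) (upChain S 0 p)
  | p, .app f a => .fa f p (fun i => Ft S (p + (S.far f).get i) (a i))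

/-- Pre-cooking of a proposition: `A' = F(A, ε)`. -/
def Ff (S : BSig) : Fm S → EFm S
  | .atom P a => .atom P (fun i => Ft S ((S.par P).get i) (a i))
  | .imp A B => .imp (Ff S A) (Ff S B)
  | .conj A B => .conj (Ff S A) (Ff S B)
  | .disj A B => .disj (Ff S A) (Ff S B)
  | .bot => .bot
  | .all A => .all (.tm 0) (Ff S A)
  | .ex A => .ex (.tm 0) (Ff S A)

/-- Grafting `⟨v/x⟩t` in `L'`: textual replacement of the (sort-0) variable `x` by `v`. -/
def ETm.graft (x : ℕ) (v : ETm S) : ETm S → ETm S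
  | .evar y s => if y = x ∧ s = .tm 0 then v else .evar y s
  | .qvar i => .qvar i
  | .idx i n => .idx i n
  | .fa f p a => .fa f p (fun j => ETm.graft x v (a j))
  | .sub t s => .sub (ETm.graft x v t) (ETm.graft x v s)
  | .eid n => .eid n
  | .cons t s => .cons (ETm.graft x v t) (ETm.graft x v s)
  | .up n => .up n
  | .comp t s => .comp (ETm.graft x v t) (ETm.graft x v s)

/-- Substitution `(v/x)A` of a (quantifier-closed) term for a variable in a
proposition of `L'` (capture-avoiding, since terms of `L'` have no binders). -/
def EFm.graft (x : ℕ) (v : ETm S) : EFm S → EFm S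
  | .atom P a => .atom P (fun i => ETm.graft x v (a i))
  | .imp A B => .imp (EFm.graft x v A) (EFm.graft x v B)
  | .conj A B => .conj (EFm.graft x v A) (EFm.graft x v B)
  | .disj A B => .disj (EFm.graft x v A) (EFm.graft x v B)
  | .bot => .bot
  | .all s A => .all s (EFm.graft x v A)
  | .ex s A => .ex s (EFm.graft x v A)

/- ## F-terms and F-propositions -/

/-- All named variables occurring in the term have sort `0`. -/
def ETm.vars0 : ETm S → Prop
  | .evar _ s => s = .tm 0
  | .qvar _ => True
  | .idx _ _ => True
  | .fa _ _ a => ∀ i, (a i).vars0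
  | .sub t s => t.vars0 ∧ s.vars0
  | .eid _ => True
  | .cons t s => t.vars0 ∧ s.vars0
  | .up _ => True
  | .comp t s => t.vars0 ∧ s.vars0

/-- All named variables of the proposition have sort `0`, and all its
quantifiers bind variables of sort `0`. -/
def EFm.vars0F : EFm S → Prop
  | .atom _ a => ∀ i, (a i).vars0
  | .imp A B => A.vars0F ∧ B.vars0F
  | .conj A B => A.vars0F ∧ B.vars0F
  | .disj A B => A.vars0F ∧ B.vars0F
  | .bot => True
  | .all s A => s = .tm 0 ∧ A.vars0F
  | .ex s A => s = .tm 0 ∧ A.vars0F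

/-- The proposition is `σ`-normal: every term occurring in it is `σ`-normal. -/
def EFm.TmsNormal : EFm S → Prop
  | .atom _ a => ∀ i, ENormal (a i)
  | .imp A B => A.TmsNormal ∧ B.TmsNormal
  | .conj A B => A.TmsNormal ∧ B.TmsNormal
  | .disj A B => A.TmsNormal ∧ B.TmsNormal
  | .bot => True
  | .all _ A => A.TmsNormal
  | .ex _ A => A.TmsNormal

/-- Well-sortedness of a proposition of `L'` in a context `Θ` of quantified sorts. -/
def EFmSorted : List Srt → EFm S → Prop
  | Θ, .atom P a => ∀ i, HasSort Θ (a i) (.tm ((S.par P).get i))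
  | Θ, .imp A B => EFmSorted Θ A ∧ EFmSorted Θ B
  | Θ, .conj A B => EFmSorted Θ A ∧ EFmSorted Θ B
  | Θ, .disj A B => EFmSorted Θ A ∧ EFmSorted Θ B
  | _, .bot => True
  | Θ, .all s A => EFmSorted (s :: Θ) A
  | Θ, .ex s A => EFmSorted (s :: Θ) A

/-- An F-proposition: a `σ`-normal, well-sorted proposition of `L'` containing
only variables of sort `0`. -/
def FProp (A : EFm S) : Prop := A.TmsNormal ∧ A.vars0F ∧ EFmSorted [] A

/-- An F-term of sort `0`: a `σ`-normal, well-sorted term of sort `0` of `L'`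
containing only variables of sort `0`. -/
def FTerm0 (t : ETm S) : Prop := ENormal t ∧ t.vars0 ∧ HasSort [] t (.tm 0)


/-!
Pre-cooking sends each rule of binding logic to the same rule modulo `≡`, since it commutes
with instantiation up to `≡` (and on the nose for instantiation by a variable).

Conversely, interpret `L'` in a phase model whose monoid consists of the pairs of contexts of
binding logic and whose pole is provability in binding logic, which is closed under weakening,
contraction and cut.  Terms of `L'` evaluate to binding-logic terms in an untyped semantics on
which every rule of `σ` holds as an equation, propositions become facts, and a quantifier over a
sort ranges over the denotations behaving like closed terms of that sort; sequent calculus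
modulo `≡` is sound for this model.  By adequacy, the fact interpreting a pre-cooked proposition
`A'` contains `({A}, ∅)` and is orthogonal to `(∅, {A})`; soundness of a proof of `Γ' ⊢ Δ'`,
applied to these phases, then says that `Γ ⊢ Δ` is provable.
-/

/-! ## Conversion -/

open Relation

namespace TmConv

protected theorem refl (t : ETm S) : TmConv S t t := EqvGen.refl t

protected theorem symm {t u : ETm S} (h : TmConv S t u) : TmConv S u t := EqvGen.symm _ _ h

protected theorem trans {t u v : ETm S} (h : TmConv S t u) (h' : TmConv S u v) :
    TmConv S t v :=
  EqvGen.trans _ _ _ h h'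

theorem of_rw {t u : ETm S} (h : Rw t u) : TmConv S t u := EqvGen.rel _ _ h

theorem map {F : ETm S → ETm S} (hF : ∀ {a b : ETm S}, Rw a b → Rw (F a) (F b))
    {t u : ETm S} (h : TmConv S t u) : TmConv S (F t) (F u) := by
  induction h with
  | rel _ _ r => exact of_rw (hF r)
  | refl => exact .refl _
  | symm _ _ _ ih => exact ih.symm
  | trans _ _ _ _ _ ih₁ ih₂ => exact ih₁.trans ih₂

theorem sub {t t' s s' : ETm S} (h : TmConv S t t') (h' : TmConv S s s') :
    TmConv S (.sub t s) (.sub t' s') :=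
  (map (F := (.sub · s)) .csub₁ h).trans (map .csub₂ h')

theorem cons {t t' s s' : ETm S} (h : TmConv S t t') (h' : TmConv S s s') :
    TmConv S (.cons t s) (.cons t' s') :=
  (map (F := (.cons · s)) .ccons₁ h).trans (map .ccons₂ h')

theorem comp {t t' s s' : ETm S} (h : TmConv S t t') (h' : TmConv S s s') :
    TmConv S (.comp t s) (.comp t' s') :=
  (map (F := (.comp · s)) .ccomp₁ h).trans (map .ccomp₂ h')

theorem fa_update {f : S.Fn} {p : ℕ} (a : Fin (S.far f).length → ETm S)
    (i : Fin (S.far f).length) {x y : ETm S} (h : TmConv S x y) :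
    TmConv S (.fa f p (Function.update a i x)) (.fa f p (Function.update a i y)) :=
  map (F := fun x => .fa f p (Function.update a i x))
    (fun {x y} r => by
      simpa using Rw.cfa (p := p) (i := i) (a := Function.update a i x) (by simpa using r)) h

theorem fa {f : S.Fn} {p : ℕ} {a b : Fin (S.far f).length → ETm S}
    (h : ∀ i, TmConv S (a i) (b i)) : TmConv S (.fa f p a) (.fa f p b) := by
  suffices key : ∀ (l : List (Fin (S.far f).length)) (a : Fin (S.far f).length → ETm S),
      (∀ i, TmConv S (a i) (b i)) → (∀ i ∉ l, a i = b i) →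
        TmConv S (.fa f p a) (.fa f p b) from
    key (List.finRange _) a h (fun i hi => absurd (List.mem_finRange i) hi)
  intro l
  induction l with
  | nil =>
      intro a _ hab
      rw [funext fun i => hab i List.not_mem_nil]
      exact .refl _
  | cons i l ih =>
      intro a hconv hab
      have step := fa_update (p := p) a i (hconv i)
      rw [Function.update_eq_self] at step
      refine step.trans (ih _ (fun j => ?_) (fun j hj => ?_)) <;>
        rcases eq_or_ne j i with rfl | hne
      · simpa using .refl _
      · simpa [hne] using hconv j
      · simp
      · simpa [hne] using hab j (by simp [hj, hne])

/-! Since `σ` is untyped, the annotations of `id`, `↑` and `1` are irrelevant up to `≡`: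
the rules `1.↑ → id` and `1[s].(↑ ∘ s) → s` convert between any two of them. -/

theorem eid_eid_one (a : ℕ) : TmConv S (.eid a) (.eid 1) :=
  (of_rw Rw.rscons).symm.trans <| (cons (of_rw Rw.rtid) (of_rw Rw.ridr)).trans <|
    of_rw (Rw.rvarsh (n := 0))

theorem eid_eid (a b : ℕ) : TmConv S (.eid a) (.eid b) :=
  (eid_eid_one a).trans (eid_eid_one b).symm

theorem up_up_zero (a : ℕ) : TmConv S (.up a) (.up 0) :=
  (of_rw Rw.ridr).symm.trans <|
    (comp (.refl _) (of_rw (Rw.rvarsh (n := 0))).symm).trans (of_rw Rw.rshcons)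

theorem up_up (a b : ℕ) : TmConv S (.up a) (.up b) :=
  (up_up_zero a).trans (up_up_zero b).symm

theorem idx_one_idx_one_zero (n : ℕ) : TmConv S (.idx 1 n) (.idx 1 0) :=
  (of_rw (Rw.rtid (n := 0))).symm.trans <|
    (sub (.refl _) (of_rw (Rw.rscons (n := 0))).symm).trans <|
    (of_rw Rw.rhead).trans (of_rw Rw.rtid)

theorem idx_one_idx_one (m m' : ℕ) : TmConv S (.idx 1 m) (.idx 1 m') :=
  (idx_one_idx_one_zero m).trans (idx_one_idx_one_zero m').symm

theorem upChain_upChain (j : ℕ) : ∀ a b : ℕ, TmConv S (upChain S a j) (upChain S b j) := by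
  induction j with
  | zero => exact eid_eid
  | succ j ih =>
      intro a b
      match j with
      | 0 => exact up_up a b
      | j + 1 => exact comp (up_up a b) (ih _ _)

theorem comp_upChain_upChain (j : ℕ) : ∀ (i a b c : ℕ),
    TmConv S (.comp (upChain S a j) (upChain S b i)) (upChain S c (j + i)) := by
  induction j with
  | zero =>
      intro i a b c
      simpa [upChain] using (of_rw Rw.ridl).trans (upChain_upChain i b c)
  | succ j ih =>
      intro i a b c
      match j, i with
      | 0, 0 => exact (of_rw Rw.ridr).trans (up_up a c)
      | 0, i + 1 =>
          rw [show 0 + 1 + (i + 1) = i + 2 by omega]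
          exact comp (up_up a c) (upChain_upChain _ _ _)
      | j + 1, i =>
          refine (of_rw Rw.rassoc).trans ((comp (.refl _) (ih i (a + 1) b (c + 1))).trans ?_)
          rw [show j + 1 + i = (j + i) + 1 by omega, show j + 1 + 1 + i = (j + i) + 2 by omega]
          exact comp (up_up a c) (.refl _)

theorem shiftOne_shiftOne (j q k q' k' : ℕ) :
    TmConv S (shiftOne S q k j) (shiftOne S q' k' j) := by
  unfold shiftOne
  split_ifs
  · exact idx_one_idx_one _ _
  · exact sub (idx_one_idx_one _ _) (upChain_upChain _ _ _)

theorem comp_upChain_liftAux {q k : ℕ} {s : ETm S} (i : ℕ) : ∀ (m j a : ℕ), i ≤ m →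
    TmConv S (.comp (upChain S a i) (liftAux S q k s m j)) (liftAux S q k s (m - i) (j + i)) := by
  induction i with
  | zero => intro m j a _; exact of_rw Rw.ridl
  | succ i ih =>
      intro m j a him
      obtain ⟨m, rfl⟩ : ∃ m', m = m' + 1 := ⟨m - 1, by omega⟩
      match i with
      | 0 => exact of_rw Rw.rshcons
      | i + 1 =>
          refine (of_rw Rw.rassoc).trans
            ((comp (.refl _) (ih (m + 1) j (a + 1) (by omega))).trans ?_)
          rw [show m + 1 - (i + 1) = (m - i - 1) + 1 by omega]
          refine (of_rw Rw.rshcons).trans ?_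
          rw [show m + 1 - (i + 1 + 1) = m - i - 1 by omega,
            show j + (i + 1 + 1) = j + (i + 1) + 1 by omega]
          exact .refl _

theorem sub_shiftOne_upChain {q k q₂ : ℕ} (j b k₂ : ℕ) (hk₂ : 1 ≤ k₂) :
    TmConv S (.sub (shiftOne S q k j) (upChain S b k₂))
      (shiftOne S q₂ (k + k₂) (j + k₂)) := by
  unfold shiftOne
  rw [if_neg (by omega : j + k₂ ≠ 0)]
  split_ifs with hj
  · subst hj
    simpa using sub (idx_one_idx_one _ _) (upChain_upChain _ _ _)
  · exact (of_rw Rw.rclos).trans (sub (idx_one_idx_one _ _) (comp_upChain_upChain _ _ _ _ _))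

theorem liftAux_comp_upChain {q k q₂ k₂ : ℕ} {s : ETm S} (hk₂ : 1 ≤ k₂) (b m : ℕ) :
    ∀ j, TmConv S (.comp (liftAux S q k s m j) (upChain S b k₂))
      (liftAux S q₂ (k + k₂) s m (j + k₂)) := by
  induction m with
  | zero =>
      intro j
      exact (of_rw Rw.rassoc).trans (comp (.refl _) (comp_upChain_upChain k k₂ q b q₂))
  | succ m ih =>
      intro j
      refine (of_rw Rw.rmap).trans (cons (sub_shiftOne_upChain j b k₂ hk₂) ?_)
      simpa [show j + 1 + k₂ = j + k₂ + 1 by omega] using ih (j + 1)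

theorem liftAux_liftAux {q q' : ℕ} (s : ETm S) (k k' : ℕ) (m : ℕ) : ∀ j, m + j = k' + 1 →
    TmConv S (liftAux S q' (k' + 1) (liftSub S q (k + 1) s) m j)
      (liftAux S q (k + 1 + (k' + 1)) s (m + (k + 1)) j) := by
  induction m with
  | zero =>
      intro j hj
      obtain rfl : j = k' + 1 := by omega
      have key := liftAux_comp_upChain (q := q) (q₂ := q) (s := s) (k := k + 1) (k₂ := k' + 1)
        (by omega) q' (k + 1) 0
      rw [Nat.zero_add] at key
      rw [Nat.zero_add]
      exact key
  | succ m ih =>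
      intro j hj
      rw [show m + 1 + (k + 1) = (m + (k + 1)) + 1 by omega]
      exact cons (shiftOne_shiftOne _ _ _ _ _) (ih (j + 1) (by omega))

theorem liftSub_liftSub (q k k' q' : ℕ) (s : ETm S) :
    TmConv S (liftSub S q' k' (liftSub S q k s)) (liftSub S q (k + k') s) := by
  match k', k with
  | 0, k => exact .refl _
  | k' + 1, 0 =>
      have key : ∀ m j, TmConv S (liftAux S q' (k' + 1) s m j) (liftAux S q (k' + 1) s m j) := by
        intro m
        induction m with
        | zero => intro j; exact comp (.refl _) (upChain_upChain _ _ _)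
        | succ m ih => intro j; exact cons (shiftOne_shiftOne _ _ _ _ _) (ih _)
      simpa [liftSub] using key (k' + 1) 0
  | k' + 1, k + 1 =>
      have key := liftAux_liftAux (q := q) (q' := q') s k k' (k' + 1) 0 rfl
      rw [show k' + 1 + (k + 1) = k + 1 + (k' + 1) by omega] at key
      exact key

end TmConv

/-! ## Pre-cooking -/

theorem hasSort_upChain {Θ : List Srt} (m : ℕ) :
    ∀ a, HasSort Θ (upChain S a m) (.sb (a + m) a) := by
  induction m with
  | zero => intro a; exact .eid
  | succ m ih =>
      intro a
      match m with
      | 0 => exact .up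
      | m + 1 =>
          rw [show a + (m + 1 + 1) = (a + 1) + (m + 1) by omega]
          exact .comp .up (ih (a + 1))

theorem hasSort_shiftOne {Θ : List Srt} {q k j : ℕ} (hjk : j < k) :
    HasSort Θ (shiftOne S q k j) (.tm (q + k)) := by
  unfold shiftOne
  split_ifs with hj
  · exact .idx le_rfl (by omega)
  · have h := hasSort_upChain (S := S) (Θ := Θ) j (q + k - j)
    rw [show q + k - j + j = q + k by omega] at h
    exact .sub (.idx le_rfl (by omega)) h

theorem hasSort_liftAux {Θ : List Srt} {q k p : ℕ} {s : ETm S} (hs : HasSort Θ s (.sb q p))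
    (m : ℕ) : ∀ j, m + j = k → HasSort Θ (liftAux S q k s m j) (.sb (q + k) (p + m)) := by
  induction m with
  | zero => intro j _; exact .comp hs (hasSort_upChain _ _)
  | succ m ih => intro j hmj; exact .cons (hasSort_shiftOne (by omega)) (ih (j + 1) (by omega))

theorem hasSort_liftSub {Θ : List Srt} {q k p : ℕ} {s : ETm S} (hs : HasSort Θ s (.sb q p)) :
    HasSort Θ (liftSub S q k s) (.sb (q + k) (p + k)) := by
  match k with
  | 0 => exact hs
  | k + 1 => exact hasSort_liftAux hs (k + 1) 0 rfl

theorem hasSort_Ft {Θ : List Srt} (t : Tm S) :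
    ∀ p, Tm.WF p t → HasSort Θ (Ft S p t) (.tm p) := by
  induction t with
  | bvar i =>
      intro p (hp : i < p)
      simpa [Ft, hp] using HasSort.idx (Θ := Θ) (S := S) (by omega) hp
  | fvar x =>
      intro p _
      by_cases hp : p = 0
      · simpa [Ft, hp] using HasSort.evar
      · simpa [Ft, hp] using HasSort.sub HasSort.evar (hasSort_upChain (Θ := Θ) p 0)
  | app f a ih => intro p hp; exact .fa fun j => ih j _ (hp j)

theorem openE_upChain (v : ETm S) (k m : ℕ) :
    ∀ a, ETm.openE v k (upChain S a m) = upChain S a m := by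
  induction m with
  | zero => intro a; rfl
  | succ m ih =>
      intro a
      match m with
      | 0 => rfl
      | m + 1 => exact congrArg (ETm.comp _) (ih (a + 1))

theorem TmConv.Ft_sub_liftSub (t : Tm S) : ∀ k, Tm.WF k t → ∀ p, 1 ≤ p →
    TmConv S (.sub (Ft S k t) (liftSub S p k (upChain S 0 p))) (Ft S (p + k) t) := by
  induction t with
  | bvar i =>
      intro k (hik : i < k) p hp
      simp only [Ft, if_pos hik, if_pos (by omega : i < p + k)]
      obtain ⟨k, rfl⟩ : ∃ k', k = k' + 1 := ⟨k - 1, by omega⟩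
      match i with
      | 0 => exact of_rw Rw.rhead
      | i + 1 =>
          refine (sub (of_rw (Rw.ridx (by omega) (by omega))) (.refl _)).trans <|
            (of_rw Rw.rclos).trans <|
            (sub (.refl _) (comp_upChain_liftAux (i + 1) (k + 1) 0 _ (by omega))).trans ?_
          rw [show k + 1 - (i + 1) = (k - i - 1) + 1 by omega, Nat.zero_add]
          refine (of_rw Rw.rhead).trans (of_rw ?_).symm
          simpa [shiftOne, show p + (k + 1) - (i + 1) = p + k - i by omega] using
            Rw.ridx (S := S) (i := i + 1) (n := p + (k + 1)) (by omega) (by omega)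
  | fvar x =>
      intro k _ p hp
      by_cases hk : k = 0
      · subst hk
        simpa [Ft, show p ≠ 0 by omega, liftSub] using TmConv.refl _
      · simp only [Ft, if_neg hk, if_neg (by omega : p + k ≠ 0)]
        obtain ⟨k, rfl⟩ : ∃ k', k = k' + 1 := ⟨k - 1, by omega⟩
        refine (of_rw Rw.rclos).trans <|
          (sub (.refl _) (comp_upChain_liftAux (k + 1) (k + 1) 0 _ le_rfl)).trans ?_
        simpa [liftAux] using sub (.refl _) (comp_upChain_upChain _ _ _ _ _)
  | app f a ih =>
      intro k hk p hp
      have hsort : HasSort [] (liftSub S p k (upChain S 0 p)) (.sb (p + k) k) := by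
        simpa using hasSort_liftSub (k := k) (hasSort_upChain (Θ := []) (S := S) p 0)
      refine (of_rw (Rw.rfa ⟨[], hsort⟩)).trans (fa fun i => ?_)
      refine (sub (.refl _) (liftSub_liftSub p k _ (p + k) _)).trans ?_
      simpa [Nat.add_assoc] using ih i (k + (S.far f).get i) (hk i) p hp

theorem TmConv.Ft_openT {u : Tm S} (hu : Tm.WF 0 u) (t : Tm S) : ∀ p k,
    TmConv S (Ft S p (Tm.openT u (k + p) t)) (ETm.openE (Ft S 0 u) k (Ft S p t)) := by
  induction t with
  | bvar i =>
      intro p k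
      by_cases hi : i = k + p
      · subst hi
        by_cases hp : p = 0
        · subst hp
          simpa [Tm.openT, Ft, ETm.openE] using TmConv.refl _
        · simpa [Tm.openT, Ft, ETm.openE, hp, openE_upChain, liftSub] using
            (Ft_sub_liftSub u 0 hu p (by omega)).symm
      · by_cases hlt : i < p
        · simpa [Tm.openT, hi, Ft, hlt, ETm.openE] using TmConv.refl _
        · by_cases hp : p = 0
          · subst hp
            simpa [Tm.openT, Ft, ETm.openE, show i ≠ k by omega] using TmConv.refl _
          · simpa [Tm.openT, hi, Ft, hlt, hp, ETm.openE, openE_upChain,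
              show i - p ≠ k by omega] using TmConv.refl _
  | fvar x =>
      intro p k
      by_cases hp : p = 0 <;> simpa [Tm.openT, Ft, hp, ETm.openE, openE_upChain] using TmConv.refl _
  | app f a ih =>
      intro p k
      refine fa fun i => ?_
      simpa [Nat.add_assoc] using ih i (p + (S.far f).get i) k

namespace FConv

protected theorem refl (A : EFm S) : FConv A A := by
  induction A with
  | atom P a => exact .atom fun i => .refl _
  | imp _ _ ihA ihB => exact .imp ihA ihB
  | conj _ _ ihA ihB => exact .conj ihA ihB
  | disj _ _ ihA ihB => exact .disj ihA ihB
  | bot => exact .bot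
  | all _ _ ih => exact .all ih
  | ex _ _ ih => exact .ex ih

theorem Ff_openF {u : Tm S} (hu : Tm.WF 0 u) (A : Fm S) :
    ∀ k, FConv (Ff S (Fm.openF u k A)) (EFm.openF (Ft S 0 u) k (Ff S A)) := by
  induction A with
  | atom P a => intro k; exact .atom fun i => TmConv.Ft_openT hu (a i) _ k
  | imp _ _ ihA ihB => intro k; exact .imp (ihA k) (ihB k)
  | conj _ _ ihA ihB => intro k; exact .conj (ihA k) (ihB k)
  | disj _ _ ihA ihB => intro k; exact .disj (ihA k) (ihB k)
  | bot => intro k; exact .bot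
  | all _ ih => intro k; exact .all (ih (k + 1))
  | ex _ ih => intro k; exact .ex (ih (k + 1))

end FConv

theorem Ft_openT_fvar (x : ℕ) (t : Tm S) :
    ∀ p k, Ft S p (Tm.openT (.fvar x) (k + p) t) = ETm.openE (.evar x (.tm 0)) k (Ft S p t) := by
  induction t with
  | bvar i =>
      intro p k
      by_cases hi : i = k + p
      · subst hi
        by_cases hp : p = 0 <;> simp [Tm.openT, Ft, ETm.openE, hp, openE_upChain]
      · by_cases hlt : i < p
        · simp [Tm.openT, hi, Ft, hlt, ETm.openE]
        · by_cases hp : p = 0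
          · subst hp
            simp [Tm.openT, Ft, ETm.openE, show i ≠ k by omega]
          · simp [Tm.openT, hi, Ft, hlt, hp, ETm.openE, openE_upChain, show i - p ≠ k by omega]
  | fvar y =>
      intro p k
      by_cases hp : p = 0 <;> simp [Tm.openT, Ft, hp, ETm.openE, openE_upChain]
  | app f a ih =>
      intro p k
      simp only [Tm.openT, Ft, ETm.openE]
      congr 1
      funext i
      simpa [Nat.add_assoc] using ih i (p + (S.far f).get i) k

theorem Ff_openF_fvar (x : ℕ) (A : Fm S) :
    ∀ k, Ff S (Fm.openF (.fvar x) k A) = EFm.openF (.evar x (.tm 0)) k (Ff S A) := by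
  induction A with
  | atom P a =>
      intro k
      simp only [Fm.openF, Ff, EFm.openF]
      congr 1
      funext i
      simpa using Ft_openT_fvar x (a i) _ k
  | imp _ _ ihA ihB => intro k; simp only [Fm.openF, Ff, EFm.openF, ihA, ihB]
  | conj _ _ ihA ihB => intro k; simp only [Fm.openF, Ff, EFm.openF, ihA, ihB]
  | disj _ _ ihA ihB => intro k; simp only [Fm.openF, Ff, EFm.openF, ihA, ihB]
  | bot => intro k; rfl
  | all _ ih => intro k; simp only [Fm.openF, Ff, EFm.openF, ih]
  | ex _ ih => intro k; simp only [Fm.openF, Ff, EFm.openF, ih]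

theorem fvs_upChain (m : ℕ) : ∀ a, (upChain S a m).fvs = ∅ := by
  induction m with
  | zero => intro a; rfl
  | succ m ih =>
      intro a
      match m with
      | 0 => rfl
      | m + 1 => simp [upChain, ETm.fvs, ih]

theorem fvs_Ft (t : Tm S) : ∀ p, (Ft S p t).fvs = t.fv := by
  induction t with
  | bvar i =>
      intro p
      by_cases h : i < p
      · simp [Ft, h, ETm.fvs, Tm.fv]
      · by_cases hp : p = 0 <;> simp [Ft, h, hp, ETm.fvs, Tm.fv, fvs_upChain]
  | fvar x => intro p; by_cases hp : p = 0 <;> simp [Ft, hp, ETm.fvs, Tm.fv, fvs_upChain]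
  | app f a ih => intro p; exact Set.iUnion_congr fun i => ih i _

theorem fvs_Ff (A : Fm S) : (Ff S A).fvs = A.fv := by
  induction A with
  | atom P a => exact Set.iUnion_congr fun i => fvs_Ft _ _
  | imp _ _ ihA ihB | conj _ _ ihA ihB | disj _ _ ihA ihB =>
      simp only [Ff, EFm.fvs, Fm.fv, ihA, ihB]
  | bot => rfl
  | all _ ih | ex _ ih => exact ih

theorem mFvE_map_Ff (Γ : Multiset (Fm S)) : mFvE (Γ.map (Ff S)) = mFv Γ := by
  ext x
  simp [mFvE, mFv, fvs_Ff]

theorem Deriv.precook {Γ Δ : Multiset (Fm S)} (d : Deriv S Γ Δ) :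
    DerivMod FConv (Γ.map (Ff S)) (Δ.map (Ff S)) := by
  induction d with
  | ax A => exact ⟨1, .ax (.refl _)⟩
  | botL => rw [Multiset.map_cons]; exact ⟨1, .botL (.refl _)⟩
  | cut _ _ ih₁ ih₂ =>
      simp only [Multiset.map_cons] at ih₁ ih₂
      exact ih₁.elim fun _ h₁ => ih₂.elim fun _ h₂ => ⟨_, .cut (.refl _) h₁ h₂⟩
  | contrL _ ih =>
      simp only [Multiset.map_cons] at ih ⊢
      exact ih.elim fun _ h => ⟨_, .contrL (.refl _) (.refl _) h⟩
  | contrR _ ih =>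
      simp only [Multiset.map_cons] at ih ⊢
      exact ih.elim fun _ h => ⟨_, .contrR (.refl _) (.refl _) h⟩
  | weakL _ ih => rw [Multiset.map_cons]; exact ih.elim fun _ h => ⟨_, .weakL h⟩
  | weakR _ ih => rw [Multiset.map_cons]; exact ih.elim fun _ h => ⟨_, .weakR h⟩
  | impL _ _ ih₁ ih₂ =>
      simp only [Multiset.map_cons] at ih₁ ih₂ ⊢
      exact ih₁.elim fun _ h₁ => ih₂.elim fun _ h₂ => ⟨_, .impL (.refl _) h₁ h₂⟩
  | impR _ ih =>
      simp only [Multiset.map_cons] at ih ⊢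
      exact ih.elim fun _ h => ⟨_, .impR (.refl _) h⟩
  | conjL _ ih =>
      simp only [Multiset.map_cons] at ih ⊢
      exact ih.elim fun _ h => ⟨_, .conjL (.refl _) h⟩
  | conjR _ _ ih₁ ih₂ =>
      simp only [Multiset.map_cons] at ih₁ ih₂ ⊢
      exact ih₁.elim fun _ h₁ => ih₂.elim fun _ h₂ => ⟨_, .conjR (.refl _) h₁ h₂⟩
  | disjL _ _ ih₁ ih₂ =>
      simp only [Multiset.map_cons] at ih₁ ih₂ ⊢
      exact ih₁.elim fun _ h₁ => ih₂.elim fun _ h₂ => ⟨_, .disjL (.refl _) h₁ h₂⟩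
  | disjR _ ih =>
      simp only [Multiset.map_cons] at ih ⊢
      exact ih.elim fun _ h => ⟨_, .disjR (.refl _) h⟩
  | allL ht _ ih =>
      simp only [Multiset.map_cons] at ih ⊢
      exact ih.elim fun _ h =>
        ⟨_, .allL (.refl _) (FConv.Ff_openF ht _ 0) (hasSort_Ft _ 0 ht) h⟩
  | exR ht _ ih =>
      simp only [Multiset.map_cons] at ih ⊢
      exact ih.elim fun _ h =>
        ⟨_, .exR (.refl _) (FConv.Ff_openF ht _ 0) (hasSort_Ft _ 0 ht) h⟩
  | allR hΓ hΔ hA _ ih =>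
      simp only [Multiset.map_cons, Ff_openF_fvar] at ih ⊢
      rw [← mFvE_map_Ff] at hΓ hΔ
      rw [← fvs_Ff] at hA
      exact ih.elim fun _ h => ⟨_, .allR (.refl _) hΓ hΔ hA h⟩
  | exL hΓ hΔ hA _ ih =>
      simp only [Multiset.map_cons, Ff_openF_fvar] at ih ⊢
      rw [← mFvE_map_Ff] at hΓ hΔ
      rw [← fvs_Ff] at hA
      exact ih.elim fun _ h => ⟨_, .exL (.refl _) hΓ hΔ hA h⟩

/-! ## Evaluation of the terms of `L'` -/

def Tm.junk : Tm S := .fvar 0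

def Tm.shift (k : ℕ) : ℕ → Tm S → Tm S
  | d, .bvar j => if j < d then .bvar j else .bvar (j + k)
  | _, .fvar c => .fvar c
  | d, .app f a => .app f fun i => Tm.shift k (d + (S.far f).get i) (a i)

namespace Tm

theorem shift_shift (T : Tm S) : ∀ k c d e, e ≤ d →
    shift k (d + c) (shift c e T) = shift c e (shift k d T) := by
  induction T with
  | bvar j =>
      intro k c d e hed
      by_cases h₁ : j < e
      · simp [shift, h₁, show j < d by omega, show j < d + c by omega]
      · by_cases h₂ : j < d
        · simp [shift, h₁, h₂]
        · simp only [shift, h₁, h₂, ↓reduceIte, add_lt_add_iff_right, bvar.injEq,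
            show ¬j + k < e by omega]
          omega
  | fvar => intros; rfl
  | app f a ih =>
      intro k c d e hed
      simp only [shift]
      congr 1
      funext i
      simpa [Nat.add_right_comm] using
        ih i k c (d + (S.far f).get i) (e + (S.far f).get i) (by omega)

theorem shift_zero (d : ℕ) : shift (S := S) 0 d = id := by
  funext T
  induction T generalizing d with
  | bvar j => simp [shift]
  | fvar => rfl
  | app f a ih => simp only [shift, ih, id]

theorem shift_of_WF (T : Tm S) : ∀ k d, Tm.WF d T → shift k d T = T := by
  induction T with
  | bvar j => intro k d (h : j < d); simp [shift, h]
  | fvar => intros; rfl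
  | app f a ih => intro k d h; simp only [shift]; congr 1; funext i; exact ih i k _ (h i)

theorem WF.mono {T : Tm S} : ∀ {d d'}, d ≤ d' → Tm.WF d T → Tm.WF d' T := by
  induction T with
  | bvar j => intro d d' h (hb : j < d); exact (lt_of_lt_of_le hb h :)
  | fvar => intros; trivial
  | app f a ih => intro d d' h hb i; exact ih i (by omega) (hb i)

theorem WF.shift {T : Tm S} : ∀ {k d m}, Tm.WF (d + m) T → Tm.WF (d + m + k) (T.shift k d) := by
  induction T with
  | bvar j =>
      intro k d m (hb : j < d + m)
      by_cases h : j < d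
      · simp only [Tm.shift, if_pos h]; exact (by omega : j < d + m + k)
      · simp only [Tm.shift, if_neg h]; exact (by omega : j + k < d + m + k)
  | fvar => intros; trivial
  | app f a ih =>
      intro k d m hb i
      simpa [Nat.add_right_comm] using
        ih i (k := k) (d := d + (S.far f).get i) (m := m) (by simpa [Nat.add_right_comm] using hb i)

end Tm

/-- Values of terms of `L'`: along the path `[]` sits the value of a term, along `j :: π` the
`j`-th component of a substitution.  Paths are untyped so that every rule of `σ`, which is
untyped as well, holds as an equation between values. -/
def Val (S : BSig) := List ℕ → Option (Tm S)

namespace Val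

def const (T : Tm S) : Val S := fun π => if π = [] then some T else none

def map (g : Tm S → Tm S) (v : Val S) : Val S := fun π => (v π).map g

def head (v : Val S) : Tm S := (v []).getD Tm.junk

def component (j : ℕ) (v : Val S) : Val S := fun π => v (j :: π)

def cons (a b : Val S) : Val S := fun π =>
  match π with
  | [] => b []
  | 0 :: π => a π
  | (j + 1) :: π => b (j :: π)

def drop (m : ℕ) (v : Val S) : Val S := fun π =>
  match π with
  | [] => v []
  | j :: π => v ((j + m) :: π)

def prependBvars (j m : ℕ) (w : Val S) : Val S := fun π =>
  match π with
  | [] => w []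
  | i :: π => if i < m then (if π = [] then some (.bvar (j + i)) else none) else w ((i - m) :: π)

def lift (k : ℕ) (v : Val S) : Val S := prependBvars 0 k (v.map (Tm.shift k 0))

def bvars : Val S := fun π =>
  match π with
  | [j] => some (.bvar j)
  | _ => none

theorem map_const (g : Tm S → Tm S) (T : Tm S) : (const T).map g = const (g T) := by
  funext π
  by_cases h : π = [] <;> simp [map, const, h]

@[simp]
theorem head_const (T : Tm S) : (const T).head = T := rfl

theorem head_map_shift (v : Val S) (k d : ℕ) :
    (v.map (Tm.shift k d)).head = v.head.shift k d := by
  simp only [head, map]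
  cases v [] <;> rfl

theorem lift_zero (v : Val S) : v.lift 0 = v := by
  funext π
  match π with
  | [] => simp [lift, prependBvars, map, Tm.shift_zero]
  | i :: π => simp [lift, prependBvars, map, Tm.shift_zero]

theorem drop_lift (k : ℕ) (v : Val S) : (v.lift k).drop k = v.map (Tm.shift k 0) := by
  funext π
  match π with
  | [] => rfl
  | j :: π => simp [drop, lift, prependBvars]

theorem lift_map_shift (v : Val S) (k d c : ℕ) :
    (v.map (Tm.shift k d)).lift c = (v.lift c).map (Tm.shift k (d + c)) := by
  funext π
  match π with
  | [] =>
      simp only [lift, prependBvars, map, Option.map_map]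
      congr 1
      funext T
      exact (Tm.shift_shift T k c d 0 (Nat.zero_le _)).symm
  | i :: π =>
      simp only [lift, prependBvars, map]
      split_ifs with hi hπ
      · simp [Tm.shift, show i < d + c by omega]
      · rfl
      · simp only [Option.map_map]
        congr 1
        funext T
        exact (Tm.shift_shift T k c d 0 (Nat.zero_le _)).symm

theorem component_lift (v : Val S) (k j : ℕ) :
    (v.lift k).component j
      = if j < k then .const (.bvar j) else (v.component (j - k)).map (Tm.shift k 0) := by
  funext π
  split_ifs with hj <;> simp [component, lift, prependBvars, const, map, hj]

theorem lift_bvars (k : ℕ) : (bvars : Val S).lift k = bvars := by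
  funext π
  match π with
  | [] => rfl
  | [i] =>
      by_cases hi : i < k
      · simp [lift, prependBvars, bvars, hi]
      · simp only [lift, prependBvars, hi, ↓reduceIte, map, bvars, Option.map_some, Tm.shift,
          not_lt_zero, Option.some.injEq, Tm.bvar.injEq]
        omega
  | i :: j :: π => by_cases hi : i < k <;> simp [lift, prependBvars, bvars, map, hi]

end Val

abbrev Den (S : BSig) := Val S → Val S

def ShiftEquivariant (φ : Den S) : Prop :=
  ∀ k d v, φ (v.map (Tm.shift k d)) = (φ v).map (Tm.shift k d)

def ETm.eval (η : ℕ → Srt → Den S) (χ : ℕ → Den S) : ETm S → Den S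
  | .evar x s, v => η x s v
  | .qvar k, v => χ k v
  | .idx i _, v => v.component (i - 1)
  | .fa f _ a, v => .const (.app f fun i => (ETm.eval η χ (a i) (v.lift ((S.far f).get i))).head)
  | .sub t s, v => ETm.eval η χ t (ETm.eval η χ s v)
  | .eid _, v => v
  | .cons t s, v => .cons (ETm.eval η χ t v) (ETm.eval η χ s v)
  | .up _, v => v.drop 1
  | .comp t s, v => ETm.eval η χ t (ETm.eval η χ s v)

namespace ETm

variable {η : ℕ → Srt → Den S} {χ : ℕ → Den S}

theorem eval_upChain (v : Val S) (m : ℕ) : ∀ a, (upChain S a m).eval η χ v = v.drop m := by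
  induction m with
  | zero =>
      intro a
      funext π
      match π with
      | [] => rfl
      | j :: π => rfl
  | succ m ih =>
      intro a
      match m with
      | 0 => rfl
      | m + 1 =>
          show (up a).eval η χ ((upChain S (a + 1) (m + 1)).eval η χ v) = _
          rw [ih]
          funext π
          match π with
          | [] => rfl
          | j :: π => simp [eval, Val.drop, Nat.add_assoc, Nat.add_comm 1]

theorem eval_map_shift (hη : ∀ x s, ShiftEquivariant (η x s))
    (hχ : ∀ k, ShiftEquivariant (χ k)) (e : ETm S) :
    ∀ k d v, e.eval η χ (v.map (Tm.shift k d)) = (e.eval η χ v).map (Tm.shift k d) := by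
  induction e with
  | evar x s => exact hη x s
  | qvar j => exact hχ j
  | idx | eid => intros; rfl
  | up =>
      intro k d v
      funext π
      match π with
      | [] | j :: π => rfl
  | fa f p a ih =>
      intro k d v
      simp only [eval, Val.map_const, Tm.shift]
      congr 2
      funext i
      rw [Val.lift_map_shift, ih, Val.head_map_shift]
  | sub t s iht ihs | comp t s iht ihs => intro k d v; simp only [eval, ihs, iht]
  | cons t s iht ihs =>
      intro k d v
      funext π
      match π with
      | [] | 0 :: π | (j + 1) :: π => simp [eval, Val.cons, iht, ihs, Val.map]

theorem eval_shiftOne {q k j : ℕ} (hj : j < k) (v : Val S) :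
    (shiftOne S q k j).eval η χ (v.lift k) = .const (.bvar j) := by
  funext π
  unfold shiftOne
  split_ifs with hj₀
  · subst hj₀
    by_cases hπ : π = [] <;>
      simp [eval, Val.component, Val.lift, Val.prependBvars, Val.const, hπ, hj]
  · simp only [eval, eval_upChain]
    by_cases hπ : π = [] <;>
      simp [Val.component, Val.drop, Val.lift, Val.prependBvars, Val.const, hπ, hj]

theorem eval_liftAux (hη : ∀ x s, ShiftEquivariant (η x s))
    (hχ : ∀ k, ShiftEquivariant (χ k)) {q k : ℕ} {s : ETm S} (v : Val S) (m : ℕ) :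
    ∀ j, m + j = k → (liftAux S q k s m j).eval η χ (v.lift k)
      = Val.prependBvars j m ((s.eval η χ v).map (Tm.shift k 0)) := by
  induction m with
  | zero =>
      intro j _
      show s.eval η χ ((upChain S q k).eval η χ (v.lift k)) = _
      rw [eval_upChain, Val.drop_lift, eval_map_shift hη hχ]
      funext π
      match π with
      | [] => rfl
      | i :: π => simp [Val.prependBvars]
  | succ m ih =>
      intro j hmj
      show Val.cons ((shiftOne S q k j).eval η χ (v.lift k))
        ((liftAux S q k s m (j + 1)).eval η χ (v.lift k)) = _
      rw [eval_shiftOne (by omega), ih (j + 1) (by omega)]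
      funext π
      match π with
      | [] => rfl
      | 0 :: π => by_cases hπ : π = [] <;> simp [Val.cons, Val.const, Val.prependBvars, hπ]
      | (i + 1) :: π =>
          by_cases hi : i < m <;>
            simp [Val.cons, Val.prependBvars, hi, Nat.add_assoc, Nat.add_comm 1]

theorem eval_liftSub (hη : ∀ x s, ShiftEquivariant (η x s))
    (hχ : ∀ k, ShiftEquivariant (χ k)) {q k : ℕ} {s : ETm S} (v : Val S) :
    (liftSub S q k s).eval η χ (v.lift k) = (s.eval η χ v).lift k := by
  match k with
  | 0 => simp [liftSub, Val.lift_zero]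
  | k + 1 => simpa [liftSub, Val.lift] using eval_liftAux hη hχ v (k + 1) 0 rfl

theorem eval_eq_of_rw (hη : ∀ x s, ShiftEquivariant (η x s))
    (hχ : ∀ k, ShiftEquivariant (χ k)) {t u : ETm S} (r : Rw t u) :
    t.eval η χ = u.eval η χ := by
  induction r with
  | @ridx i n _ _ =>
      funext v π
      simp [eval, eval_upChain, Val.component, Val.drop]
  | rhead | rtid | rclos | ridl | rassoc | ridr => rfl
  | rshcons | rmap | rvarsh | rscons =>
      funext v π
      match π with
      | [] | 0 :: π | (j + 1) :: π => rfl
  | rfa =>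
      funext v
      simp only [eval, eval_liftSub hη hχ]
  | @cfa f p a i t' _ ih =>
      funext v
      simp only [eval]
      congr 3
      funext j
      rcases eq_or_ne j i with rfl | hne
      · simp [ih]
      · simp [hne]
  | csub₁ _ ih | ccomp₁ _ ih => funext v; simp only [eval, ih]
  | csub₂ _ ih | ccomp₂ _ ih => funext v; simp only [eval, ih]
  | ccons₁ _ ih | ccons₂ _ ih => funext v; simp only [eval, ih]

theorem eval_eq_of_tmConv (hη : ∀ x s, ShiftEquivariant (η x s))
    (hχ : ∀ k, ShiftEquivariant (χ k)) {t u : ETm S} (h : TmConv S t u) :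
    t.eval η χ = u.eval η χ := by
  induction h with
  | rel _ _ r => exact eval_eq_of_rw hη hχ r
  | refl => rfl
  | symm _ _ _ ih => exact ih.symm
  | trans _ _ _ _ _ ih₁ ih₂ => exact ih₁.trans ih₂

end ETm

def SameHead (m : ℕ) (a b : Val S) : Prop := a.head = b.head ∧ Tm.WF m a.head

def SameComponents (m c : ℕ) (a b : Val S) : Prop :=
  ∀ j < c, SameHead m (a.component j) (b.component j)

/-- The number of de Bruijn constants available in a term of sort `s`. -/
def Srt.ctx : Srt → ℕ
  | .tm q => q
  | .sb n _ => n

def SameAt : Srt → ℕ → Val S → Val S → Prop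
  | .tm _, m, a, b => SameHead m a b
  | .sb _ p, m, a, b => SameComponents m p a b

/-- Denotations behaving like closed terms of sort `s`, a logical relation. -/
def SortedDen (s : Srt) (φ : Den S) : Prop :=
  ShiftEquivariant φ ∧ ∀ m v w, SameComponents m s.ctx v w → SameAt s m (φ v) (φ w)

theorem SameHead.map_shift {m : ℕ} {a b : Val S} (h : SameHead m a b) (k : ℕ) :
    SameHead (m + k) (a.map (Tm.shift k 0)) (b.map (Tm.shift k 0)) := by
  refine ⟨by simp only [Val.head_map_shift, h.1], ?_⟩
  simpa [Val.head_map_shift] using Tm.WF.shift (d := 0) (k := k) (by simpa using h.2)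

theorem SameComponents.lift {m c : ℕ} {v w : Val S} (h : SameComponents m c v w) (k : ℕ) :
    SameComponents (m + k) (c + k) (v.lift k) (w.lift k) := by
  intro j hj
  rw [Val.component_lift, Val.component_lift]
  split_ifs with hjk
  · exact ⟨rfl, (by omega : j < m + k)⟩
  · exact (h (j - k) (by omega)).map_shift k

theorem sameAt_eval {η : ℕ → Srt → Den S} {χ : ℕ → Den S}
    (hη : ∀ x s, SortedDen s (η x s)) {t : ETm S} {s : Srt} (h : HasSort [] t s) :
    ∀ m v w, SameComponents m s.ctx v w → SameAt s m (t.eval η χ v) (t.eval η χ w) := by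
  induction h with
  | evar => exact (hη _ _).2
  | qvar hs => simp at hs
  | idx h₁ h₂ => intro m v w he; exact he _ (by simp only [Srt.ctx]; omega)
  | @fa f p a _ ih =>
      intro m v w he
      have harg i := ih i (m + (S.far f).get i) _ _ (he.lift ((S.far f).get i))
      exact ⟨congrArg (fun a => (Val.const (.app f a)).head) (funext fun i => (harg i).1),
        fun i => (harg i).2⟩
  | sub _ _ ih₁ ih₂ | comp _ _ ih₁ ih₂ => intro m v w he; exact ih₁ m _ _ (ih₂ m v w he)
  | eid => intro m v w he; exact he
  | cons _ _ ih₁ ih₂ =>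
      intro m v w he j hj
      match j with
      | 0 => exact ih₁ m v w he
      | j + 1 => exact ih₂ m v w he j (by omega)
  | up => intro m v w he j hj; exact he (j + 1) (by simp only [Srt.ctx]; omega)

def denHead (φ : Den S) : Tm S := (φ fun _ => none).head

theorem SortedDen.head_eq {φ : Den S} (h : SortedDen (.tm 0) φ) (v : Val S) :
    (φ v).head = denHead φ :=
  (h.2 0 v _ fun j hj => absurd hj (Nat.not_lt_zero j)).1

theorem SortedDen.wf_denHead {φ : Den S} (h : SortedDen (.tm 0) φ) : Tm.WF 0 (denHead φ) :=
  (h.2 0 (fun _ => none) (fun _ => none) fun j hj => absurd hj (Nat.not_lt_zero j)).2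

theorem sortedDen_const {U : Tm S} (hU : Tm.WF 0 U) (s : Srt) :
    SortedDen s fun _ => Val.const U := by
  refine ⟨fun k d v => by rw [Val.map_const, Tm.shift_of_WF U k d (hU.mono (Nat.zero_le d))],
    fun m v w _ => ?_⟩
  have hU' : SameHead m (Val.const U) (Val.const U) :=
    ⟨rfl, by simpa [Val.head, Val.const] using hU.mono (Nat.zero_le m)⟩
  match s with
  | .tm _ => exact hU'
  | .sb _ _ => exact fun j _ => ⟨rfl, trivial⟩

theorem sortedDen_eval {η : ℕ → Srt → Den S} {χ : ℕ → Den S}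
    (hη : ∀ x s, SortedDen s (η x s))
    (hχ : ∀ k, ShiftEquivariant (χ k)) {t : ETm S} {s : Srt} (h : HasSort [] t s) :
    SortedDen s (t.eval η χ) :=
  ⟨t.eval_map_shift (fun x s => (hη x s).1) hχ, sameAt_eval hη h⟩

/-! ## The phase model -/

theorem Deriv.mono {Γ Δ Γ' Δ' : Multiset (Fm S)} (h : Deriv S Γ Δ) (hΓ : Γ ≤ Γ')
    (hΔ : Δ ≤ Δ') :
    Deriv S Γ' Δ' := by
  obtain ⟨Γ₀, rfl⟩ := Multiset.le_iff_exists_add.1 hΓ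
  obtain ⟨Δ₀, rfl⟩ := Multiset.le_iff_exists_add.1 hΔ
  induction Γ₀ using Multiset.induction_on with
  | empty =>
      induction Δ₀ using Multiset.induction_on with
      | empty => simpa using h
      | cons B Δ₀ ih => simpa using (ih (Multiset.le_add_right _ _)).weakR (A := B)
  | cons A Γ₀ ih => simpa using (ih (Multiset.le_add_right _ _)).weakL (A := A)

theorem Deriv.contract_left {Γ Γ₀ Δ : Multiset (Fm S)} (h : Deriv S (Γ + Γ + Γ₀) Δ) :
    Deriv S (Γ + Γ₀) Δ := by
  induction Γ using Multiset.induction_on generalizing Γ₀ with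
  | empty => simpa using h
  | cons A Γ ih =>
      have h' : Deriv S (A ::ₘ A ::ₘ (Γ + Γ + Γ₀)) Δ := by
        simpa [Multiset.cons_add, Multiset.add_cons, Multiset.cons_swap] using h
      simpa [Multiset.add_cons] using
        ih (Γ₀ := A ::ₘ Γ₀) (by simpa [Multiset.add_cons] using h'.contrL)

theorem Deriv.contract_right {Γ Δ Δ₀ : Multiset (Fm S)} (h : Deriv S Γ (Δ + Δ + Δ₀)) :
    Deriv S Γ (Δ + Δ₀) := by
  induction Δ using Multiset.induction_on generalizing Δ₀ with
  | empty => simpa using h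
  | cons B Δ ih =>
      have h' : Deriv S Γ (B ::ₘ B ::ₘ (Δ + Δ + Δ₀)) := by
        simpa [Multiset.cons_add, Multiset.add_cons, Multiset.cons_swap] using h
      simpa [Multiset.add_cons] using
        ih (Δ₀ := B ::ₘ Δ₀) (by simpa [Multiset.add_cons] using h'.contrR)

open scoped Pointwise

abbrev Phase (S : BSig) := Multiset (Fm S) × Multiset (Fm S)

def pole : Set (Phase S) := {m | Deriv S m.1 m.2}

def orth (X : Set (Phase S)) : Set (Phase S) := {m | ∀ x ∈ X, x + m ∈ pole}

def IsFact (X : Set (Phase S)) : Prop := orth (orth X) ⊆ X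

theorem add_mem_pole {m : Phase S} (w : Phase S) (h : m ∈ pole) : w + m ∈ pole :=
  Deriv.mono h (Multiset.le_add_left _ _) (Multiset.le_add_left _ _)

theorem mem_pole_of_add_self_add {x y : Phase S} (h : x + x + y ∈ pole) : x + y ∈ pole :=
  Deriv.contract_right (Deriv.contract_left h)

theorem add_subset_pole_iff {X C : Set (Phase S)} : X + C ⊆ pole ↔ C ⊆ orth X :=
  Set.add_subset_iff.trans ⟨fun h _ hc x hx => h x hx _ hc, fun h x hx _ hc => h hc x hx⟩

theorem orth_anti {X Y : Set (Phase S)} (h : X ⊆ Y) : orth Y ⊆ orth X :=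
  fun _ hm x hx => hm x (h hx)

theorem subset_orth_orth (X : Set (Phase S)) : X ⊆ orth (orth X) :=
  fun x hx _ hm => add_comm x _ ▸ hm x hx

theorem orth_orth_orth (X : Set (Phase S)) : orth (orth (orth X)) = orth X :=
  (orth_anti (subset_orth_orth X)).antisymm (subset_orth_orth _)

theorem isFact_orth (X : Set (Phase S)) : IsFact (orth X) := (orth_orth_orth X).le

theorem isFact_iInter {ι : Sort*} {X : ι → Set (Phase S)} (h : ∀ i, IsFact (X i)) :
    IsFact (⋂ i, X i) :=
  fun _ hm => Set.mem_iInter.2 fun i => h i (orth_anti (orth_anti (Set.iInter_subset X i)) hm)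

theorem orth_iUnion {ι : Sort*} (X : ι → Set (Phase S)) :
    orth (⋃ i, X i) = ⋂ i, orth (X i) := by
  ext m
  simp only [orth, Set.mem_iUnion, Set.mem_iInter, Set.mem_ofPred_eq]
  exact ⟨fun h i x hx => h x ⟨i, hx⟩, fun h x ⟨i, hx⟩ => h i x hx⟩

theorem IsFact.orth_add_subset_pole_iff {X C : Set (Phase S)} (hX : IsFact X) :
    orth X + C ⊆ pole ↔ C ⊆ X :=
  add_subset_pole_iff.trans ⟨fun h => h.trans hX, fun h => h.trans (subset_orth_orth X)⟩

theorem subset_orth_orth_add {C X Y : Set (Phase S)} (hX : C ⊆ X) (hY : C ⊆ Y) :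
    C ⊆ orth (orth (X + Y)) := fun c hc m hm => by
  simpa [add_comm] using mem_pole_of_add_self_add (hm (c + c) (Set.add_mem_add (hX hc) (hY hc)))

theorem subset_pole_of_subset_orth {C X : Set (Phase S)} (h₁ : C ⊆ X) (h₂ : C ⊆ orth X) :
    C ⊆ pole := fun c hc => by
  simpa using mem_pole_of_add_self_add (y := 0) (by simpa using h₂ hc c (h₁ hc))

theorem add_subset_pole_of_add_add {X C : Set (Phase S)} (h : X + (X + C) ⊆ pole) :
    X + C ⊆ pole := by
  rw [Set.add_subset_iff] at h ⊢
  intro x hx c hc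
  exact mem_pole_of_add_self_add (by simpa [add_assoc] using h x hx (x + c) (Set.add_mem_add hx hc))

theorem add_subset_pole_of_subset {X C : Set (Phase S)} (h : C ⊆ pole) : X + C ⊆ pole :=
  Set.add_subset_iff.2 fun x _ _ hc => add_mem_pole x (h hc)

def leftPhase (F : Fm S) : Phase S := ({F}, 0)

def rightPhase (F : Fm S) : Phase S := (0, {F})

theorem leftPhase_add_mem_pole {F : Fm S} {m : Phase S} :
    leftPhase F + m ∈ pole ↔ Deriv S (F ::ₘ m.1) m.2 := by
  simp [leftPhase, pole, Multiset.singleton_add]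

theorem add_rightPhase_mem_pole {F : Fm S} {m : Phase S} :
    m + rightPhase F ∈ pole ↔ Deriv S m.1 (F ::ₘ m.2) := by
  simp [rightPhase, pole, add_comm _ ({F} : Multiset (Fm S)), Multiset.singleton_add]

def impP (X Y : Set (Phase S)) : Set (Phase S) := orth (X + orth Y)

def conjP (X Y : Set (Phase S)) : Set (Phase S) := orth (orth (X + Y))

def disjP (X Y : Set (Phase S)) : Set (Phase S) := orth (orth X + orth Y)

def junkDen : Den S := fun _ => .const Tm.junk

/-- Denotations of the quantifier-bound variables, innermost first. -/
def qEnv (L : List (Den S)) (i : ℕ) : Den S := L.getD i junkDen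

/-- The binding-logic term denoted by a term of `L'`, its de Bruijn constants read as `bvar`s. -/
def ETm.decode (η : ℕ → Srt → Den S) (L : List (Den S)) (e : ETm S) : Tm S :=
  (e.eval η (qEnv L) Val.bvars).head

def EFm.interp (η : ℕ → Srt → Den S) : EFm S → List (Den S) → Set (Phase S)
  | .atom P a, L => orth (orth {leftPhase (.atom P fun i => (a i).decode η L)})
  | .imp A B, L => impP (A.interp η L) (B.interp η L)
  | .conj A B, L => conjP (A.interp η L) (B.interp η L)
  | .disj A B, L => disjP (A.interp η L) (B.interp η L)
  | .bot, _ => orth (orth {leftPhase .bot})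
  | .all s A, L => ⋂ φ : {φ : Den S // SortedDen s φ}, A.interp η (φ.1 :: L)
  | .ex s A, L => orth (orth (⋃ φ : {φ : Den S // SortedDen s φ}, A.interp η (φ.1 :: L)))

theorem sortedDen_junkDen (s : Srt) : SortedDen s (junkDen : Den S) :=
  sortedDen_const (U := Tm.junk) trivial s

theorem qEnv_mem_or_eq (L : List (Den S)) (i : ℕ) : qEnv L i ∈ L ∨ qEnv L i = junkDen := by
  rcases lt_or_ge i L.length with h | h
  · exact .inl (by rw [qEnv, List.getD_eq_getElem _ _ h]; exact List.getElem_mem h)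
  · exact .inr (List.getD_eq_default _ _ h)

theorem sortedDen_qEnv {L : List (Den S)} {s : Srt} (hL : ∀ φ ∈ L, SortedDen s φ) (i : ℕ) :
    SortedDen s (qEnv L i) :=
  (qEnv_mem_or_eq L i).elim (hL _) fun h => h ▸ sortedDen_junkDen s

theorem qEnv_append_singleton (L : List (Den S)) (ψ : Den S) (k : ℕ) :
    qEnv (L ++ [ψ]) k = if k = L.length then ψ else qEnv L k := by
  unfold qEnv
  rcases lt_trichotomy k L.length with h | rfl | h
  · rw [List.getD_append _ _ _ _ h, if_neg h.ne]
  · simp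
  · rw [List.getD_append_right _ _ _ _ h.le, List.getD_eq_default _ _ h.le,
      List.getD_eq_default _ _ (by simp; omega), if_neg h.ne']

namespace ETm

variable {η η' : ℕ → Srt → Den S} {χ χ' : ℕ → Den S}

theorem eval_congr_of_hasSort {t : ETm S} {s : Srt} (h : HasSort [] t s) :
    t.eval η χ = t.eval η χ' := by
  induction h with
  | qvar hs => simp at hs
  | evar | idx | eid | up => rfl
  | fa _ ih => funext v; simp only [eval, ih]
  | sub _ _ ih₁ ih₂ | cons _ _ ih₁ ih₂ | comp _ _ ih₁ ih₂ =>
      funext v; simp only [eval, ih₁, ih₂]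

theorem eval_congr_fvs {e : ETm S} (h : ∀ y ∈ e.fvs, η y = η' y) :
    e.eval η χ = e.eval η' χ := by
  induction e with
  | evar x s => simp [eval, h x (by simp [fvs])]
  | qvar | idx | eid | up => rfl
  | fa f p a ih =>
      funext v
      simp only [eval, ih _ fun y hy => h y (Set.mem_iUnion.2 ⟨_, hy⟩)]
  | sub t s iht ihs | cons t s iht ihs | comp t s iht ihs =>
      simp only [eval, iht fun y hy => h y (Or.inl hy), ihs fun y hy => h y (Or.inr hy)]

theorem eval_openE {u : ETm S} {ψ : Den S} (hu : ∀ χ, u.eval η χ = ψ) (e : ETm S)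
    (L : List (Den S)) : (openE u L.length e).eval η (qEnv L) = e.eval η (qEnv (L ++ [ψ])) := by
  induction e with
  | qvar k =>
      by_cases hk : k = L.length
      · subst hk
        simp [openE, hu, eval, qEnv_append_singleton]
      · simp [openE, hk, eval, qEnv_append_singleton]
  | evar | idx | eid | up => rfl
  | fa f p a ih => funext v; simp only [openE, eval, ih]
  | sub t s iht ihs | cons t s iht ihs | comp t s iht ihs => simp only [openE, eval, iht, ihs]

theorem eval_congr_of_tmConv (hη : ∀ x s, ShiftEquivariant (η x s)) {L : List (Den S)}
    (hL : ∀ φ ∈ L, ShiftEquivariant φ) {t u : ETm S} (h : TmConv S t u) :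
    t.eval η (qEnv L) = u.eval η (qEnv L) := by
  refine eval_eq_of_tmConv hη (fun i => ?_) h
  exact (qEnv_mem_or_eq L i).elim (hL _) fun h => h ▸ (sortedDen_junkDen (.tm 0)).1

end ETm

namespace EFm

variable {η η' : ℕ → Srt → Den S}

theorem isFact_interp (A : EFm S) : ∀ L, IsFact (A.interp η L) := by
  induction A with
  | atom | imp | conj | disj | bot | ex => intro L; exact isFact_orth _
  | all s A ih => intro L; exact isFact_iInter fun φ => ih _

theorem interp_congr_fvs {A : EFm S} (h : ∀ y ∈ A.fvs, η y = η' y) :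
    ∀ L, A.interp η L = A.interp η' L := by
  induction A with
  | atom P a =>
      intro L
      simp only [interp, ETm.decode,
        fun i => ETm.eval_congr_fvs (χ := qEnv L) fun y hy => h y (Set.mem_iUnion.2 ⟨i, hy⟩)]
  | imp A B ihA ihB | conj A B ihA ihB | disj A B ihA ihB =>
      intro L
      simp only [interp, ihA fun y hy => h y (Or.inl hy), ihB fun y hy => h y (Or.inr hy)]
  | bot => intro L; rfl
  | all s A ih | ex s A ih => intro L; simp only [interp, ih h]

theorem interp_openF {u : ETm S} {ψ : Den S} (hu : ∀ χ, u.eval η χ = ψ) (A : EFm S) :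
    ∀ L, (openF u L.length A).interp η L = A.interp η (L ++ [ψ]) := by
  induction A with
  | atom P a => intro L; simp only [openF, interp, ETm.decode, ETm.eval_openE hu]
  | imp A B ihA ihB | conj A B ihA ihB | disj A B ihA ihB =>
      intro L; simp only [openF, interp, ihA, ihB]
  | bot => intro L; rfl
  | all s A ih =>
      intro L
      exact Set.iInter_congr fun φ => ih (φ.1 :: L)
  | ex s A ih =>
      intro L
      exact congrArg (fun X => orth (orth X)) (Set.iUnion_congr fun φ => ih (φ.1 :: L))

theorem interp_congr (hη : ∀ x s, ShiftEquivariant (η x s)) {A B : EFm S} (h : FConv A B) :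
    ∀ L : List (Den S), (∀ φ ∈ L, ShiftEquivariant φ) →
      A.interp η L = B.interp η L := by
  induction h with
  | atom hab =>
      intro L hL
      simp only [interp, ETm.decode, ETm.eval_congr_of_tmConv hη hL (hab _)]
  | imp _ _ ihA ihB | conj _ _ ihA ihB | disj _ _ ihA ihB =>
      intro L hL; simp only [interp, ihA L hL, ihB L hL]
  | bot => intros; rfl
  | all _ ih =>
      intro L hL
      exact Set.iInter_congr fun φ => ih _ (List.forall_mem_cons.2 ⟨φ.2.1, hL⟩)
  | ex _ ih =>
      intro L hL
      exact congrArg (fun X => orth (orth X))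
        (Set.iUnion_congr fun φ => ih _ (List.forall_mem_cons.2 ⟨φ.2.1, hL⟩))

end EFm

/-! ## Soundness -/

def seqInterp (η : ℕ → Srt → Den S) (Γ Δ : Multiset (EFm S)) : Set (Phase S) :=
  (Γ.map fun A => A.interp η []).sum + (Δ.map fun B => orth (B.interp η [])).sum

section Soundness

variable {η : ℕ → Srt → Den S}

theorem seqInterp_zero : seqInterp η 0 0 = 0 := by simp [seqInterp]

theorem seqInterp_cons_left (A : EFm S) (Γ Δ : Multiset (EFm S)) :
    seqInterp η (A ::ₘ Γ) Δ = A.interp η [] + seqInterp η Γ Δ := by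
  simp [seqInterp, add_assoc]

theorem seqInterp_cons_right (B : EFm S) (Γ Δ : Multiset (EFm S)) :
    seqInterp η Γ (B ::ₘ Δ) = orth (B.interp η []) + seqInterp η Γ Δ := by
  simp [seqInterp, add_left_comm]

theorem seqInterp_congr_fvs {η' : ℕ → Srt → Den S} {Γ Δ : Multiset (EFm S)}
    (hΓ : ∀ y ∈ mFvE Γ, η y = η' y) (hΔ : ∀ y ∈ mFvE Δ, η y = η' y) :
    seqInterp η Γ Δ = seqInterp η' Γ Δ := by
  unfold seqInterp
  congr 2
  · exact Multiset.map_congr rfl fun A hA =>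
      EFm.interp_congr_fvs (fun y hy => hΓ y ⟨A, hA, hy⟩) []
  · exact Multiset.map_congr rfl fun B hB =>
      congrArg orth (EFm.interp_congr_fvs (fun y hy => hΔ y ⟨B, hB, hy⟩) [])

theorem FConv.interp_eq {A B : EFm S} (h : FConv A B) (hη : ∀ x s, SortedDen s (η x s)) :
    A.interp η [] = B.interp η [] :=
  EFm.interp_congr (fun x s => (hη x s).1) h [] (by simp)

theorem interp_openF_of_hasSort {t : ETm S} {s : Srt} (ht : HasSort [] t s) (A : EFm S) :
    (EFm.openF t 0 A).interp η [] = A.interp η [t.eval η fun _ => junkDen] :=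
  EFm.interp_openF (fun _ => ETm.eval_congr_of_hasSort ht) A []

def updateDen (η : ℕ → Srt → Den S) (x : ℕ) (s : Srt) (φ : Den S) :
    ℕ → Srt → Den S :=
  Function.update η x (Function.update (η x) s φ)

theorem updateDen_of_ne {x y : ℕ} (s : Srt) (φ : Den S) (h : y ≠ x) :
    updateDen η x s φ y = η y :=
  Function.update_of_ne h _ _

theorem sortedDen_updateDen (hη : ∀ x s, SortedDen s (η x s)) {x : ℕ} {s : Srt} {φ : Den S}
    (hφ : SortedDen s φ) : ∀ y s', SortedDen s' (updateDen η x s φ y s') := by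
  intro y s'
  by_cases hy : y = x
  · subst hy
    by_cases hs : s' = s
    · subst hs; simpa [updateDen] using hφ
    · simpa [updateDen, hs] using hη y s'
  · simpa [updateDen_of_ne s φ hy] using hη y s'

theorem interp_openF_evar {x : ℕ} {s : Srt} {A : EFm S} (hx : x ∉ A.fvs) (φ : Den S) :
    (EFm.openF (.evar x s) 0 A).interp (updateDen η x s φ) [] = A.interp η [φ] :=
  (EFm.interp_openF (u := .evar x s) (fun _ => by simp [ETm.eval, updateDen]) A []).trans
    (EFm.interp_congr_fvs (fun y hy => updateDen_of_ne s φ (by rintro rfl; exact hx hy)) _)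

theorem seqInterp_updateDen {x : ℕ} {s : Srt} {φ : Den S} {Γ Δ : Multiset (EFm S)}
    (hΓ : x ∉ mFvE Γ) (hΔ : x ∉ mFvE Δ) :
    seqInterp (updateDen η x s φ) Γ Δ = seqInterp η Γ Δ :=
  seqInterp_congr_fvs (fun y hy => updateDen_of_ne s φ (by rintro rfl; exact hΓ hy))
    (fun y hy => updateDen_of_ne s φ (by rintro rfl; exact hΔ hy))

def Valid (η : ℕ → Srt → Den S) (Γ Δ : Multiset (EFm S)) : Prop :=
  seqInterp η Γ Δ ⊆ pole

theorem valid_cons_left_iff {A : EFm S} {Γ Δ : Multiset (EFm S)} :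
    Valid η (A ::ₘ Γ) Δ ↔ seqInterp η Γ Δ ⊆ orth (A.interp η []) := by
  rw [Valid, seqInterp_cons_left, add_subset_pole_iff]

theorem valid_cons_right_iff {B : EFm S} {Γ Δ : Multiset (EFm S)} :
    Valid η Γ (B ::ₘ Δ) ↔ seqInterp η Γ Δ ⊆ B.interp η [] := by
  rw [Valid, seqInterp_cons_right, (EFm.isFact_interp _ _).orth_add_subset_pole_iff]

namespace Valid

variable {Γ Δ : Multiset (EFm S)} {A B C B₁ B₂ : EFm S}

theorem ax (h : A.interp η [] = B.interp η []) : Valid η {A} {B} := by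
  rw [← Multiset.cons_zero, ← Multiset.cons_zero, valid_cons_left_iff, seqInterp_cons_right,
    seqInterp_zero, add_zero, h]

theorem cut (h : A.interp η [] = B.interp η []) (h₁ : Valid η (A ::ₘ Γ) Δ)
    (h₂ : Valid η Γ (B ::ₘ Δ)) : Valid η Γ Δ := by
  rw [valid_cons_left_iff] at h₁
  rw [valid_cons_right_iff, ← h] at h₂
  exact subset_pole_of_subset_orth h₂ h₁

theorem contrL (h₁ : A.interp η [] = B₁.interp η [])
    (h₂ : A.interp η [] = B₂.interp η [])
    (h : Valid η (B₁ ::ₘ B₂ ::ₘ Γ) Δ) : Valid η (A ::ₘ Γ) Δ := by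
  rw [Valid, seqInterp_cons_left, seqInterp_cons_left, ← h₁, ← h₂] at h
  rw [Valid, seqInterp_cons_left]
  exact add_subset_pole_of_add_add h

theorem contrR (h₁ : A.interp η [] = B₁.interp η [])
    (h₂ : A.interp η [] = B₂.interp η [])
    (h : Valid η Γ (B₁ ::ₘ B₂ ::ₘ Δ)) : Valid η Γ (A ::ₘ Δ) := by
  rw [Valid, seqInterp_cons_right, seqInterp_cons_right, ← h₁, ← h₂] at h
  rw [Valid, seqInterp_cons_right]
  exact add_subset_pole_of_add_add h

theorem weakL (h : Valid η Γ Δ) : Valid η (A ::ₘ Γ) Δ := by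
  rw [Valid, seqInterp_cons_left]
  exact add_subset_pole_of_subset h

theorem weakR (h : Valid η Γ Δ) : Valid η Γ (A ::ₘ Δ) := by
  rw [Valid, seqInterp_cons_right]
  exact add_subset_pole_of_subset h

theorem impL (hC : C.interp η [] = (EFm.imp A B).interp η []) (h₁ : Valid η Γ (A ::ₘ Δ))
    (h₂ : Valid η (B ::ₘ Γ) Δ) : Valid η (C ::ₘ Γ) Δ := by
  rw [valid_cons_right_iff] at h₁
  rw [valid_cons_left_iff] at h₂
  rw [valid_cons_left_iff, hC]
  exact subset_orth_orth_add h₁ h₂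

theorem impR (hC : C.interp η [] = (EFm.imp A B).interp η [])
    (h : Valid η (A ::ₘ Γ) (B ::ₘ Δ)) :
    Valid η Γ (C ::ₘ Δ) := by
  rw [Valid, seqInterp_cons_left, seqInterp_cons_right, ← add_assoc] at h
  rw [valid_cons_right_iff, hC]
  exact add_subset_pole_iff.1 h

theorem conjL (hC : C.interp η [] = (EFm.conj A B).interp η [])
    (h : Valid η (A ::ₘ B ::ₘ Γ) Δ) :
    Valid η (C ::ₘ Γ) Δ := by
  rw [Valid, seqInterp_cons_left, seqInterp_cons_left, ← add_assoc] at h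
  rw [valid_cons_left_iff, hC, EFm.interp, conjP, orth_orth_orth]
  exact add_subset_pole_iff.1 h

theorem conjR (hC : C.interp η [] = (EFm.conj A B).interp η []) (h₁ : Valid η Γ (A ::ₘ Δ))
    (h₂ : Valid η Γ (B ::ₘ Δ)) : Valid η Γ (C ::ₘ Δ) := by
  rw [valid_cons_right_iff] at h₁ h₂
  rw [valid_cons_right_iff, hC]
  exact subset_orth_orth_add h₁ h₂

theorem disjL (hC : C.interp η [] = (EFm.disj A B).interp η []) (h₁ : Valid η (A ::ₘ Γ) Δ)
    (h₂ : Valid η (B ::ₘ Γ) Δ) : Valid η (C ::ₘ Γ) Δ := by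
  rw [valid_cons_left_iff] at h₁ h₂
  rw [valid_cons_left_iff, hC]
  exact subset_orth_orth_add h₁ h₂

theorem disjR (hC : C.interp η [] = (EFm.disj A B).interp η [])
    (h : Valid η Γ (A ::ₘ B ::ₘ Δ)) :
    Valid η Γ (C ::ₘ Δ) := by
  rw [Valid, seqInterp_cons_right, seqInterp_cons_right, ← add_assoc] at h
  rw [valid_cons_right_iff, hC]
  exact add_subset_pole_iff.1 h

theorem botL (hA : A.interp η [] = EFm.bot.interp η []) : Valid η (A ::ₘ Γ) Δ := by
  rw [valid_cons_left_iff, hA, EFm.interp, orth_orth_orth]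
  rintro c - _ rfl
  exact leftPhase_add_mem_pole.2 .botL

theorem allL {s : Srt} {ψ : Den S} (hψ : SortedDen s ψ)
    (hB : B.interp η [] = (EFm.all s A).interp η []) (hC : C.interp η [] = A.interp η [ψ])
    (h : Valid η (C ::ₘ Γ) Δ) : Valid η (B ::ₘ Γ) Δ := by
  rw [valid_cons_left_iff, hC] at h
  rw [valid_cons_left_iff, hB]
  exact h.trans (orth_anti (Set.iInter_subset_of_subset ⟨ψ, hψ⟩ subset_rfl))

theorem exR {s : Srt} {ψ : Den S} (hψ : SortedDen s ψ)
    (hB : B.interp η [] = (EFm.ex s A).interp η []) (hC : C.interp η [] = A.interp η [ψ])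
    (h : Valid η Γ (C ::ₘ Δ)) : Valid η Γ (B ::ₘ Δ) := by
  rw [valid_cons_right_iff, hC] at h
  rw [valid_cons_right_iff, hB]
  exact h.trans ((Set.subset_iUnion (fun φ : {φ : Den S // SortedDen s φ} => A.interp η [φ.1])
    ⟨ψ, hψ⟩).trans (subset_orth_orth _))

theorem allR {s : Srt} {x : ℕ} (hB : B.interp η [] = (EFm.all s A).interp η [])
    (hΓ : x ∉ mFvE Γ) (hΔ : x ∉ mFvE Δ) (hA : x ∉ A.fvs)
    (h : ∀ φ, SortedDen s φ →
      Valid (updateDen η x s φ) Γ (EFm.openF (.evar x s) 0 A ::ₘ Δ)) :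
    Valid η Γ (B ::ₘ Δ) := by
  rw [valid_cons_right_iff, hB]
  refine Set.subset_iInter fun φ => ?_
  simpa only [valid_cons_right_iff, interp_openF_evar hA, seqInterp_updateDen hΓ hΔ] using
    h φ.1 φ.2

theorem exL {s : Srt} {x : ℕ} (hB : B.interp η [] = (EFm.ex s A).interp η [])
    (hΓ : x ∉ mFvE Γ) (hΔ : x ∉ mFvE Δ) (hA : x ∉ A.fvs)
    (h : ∀ φ, SortedDen s φ →
      Valid (updateDen η x s φ) (EFm.openF (.evar x s) 0 A ::ₘ Γ) Δ) :
    Valid η (B ::ₘ Γ) Δ := by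
  rw [valid_cons_left_iff, hB, EFm.interp, orth_orth_orth, orth_iUnion]
  refine Set.subset_iInter fun φ => ?_
  simpa only [valid_cons_left_iff, interp_openF_evar hA, seqInterp_updateDen hΓ hΔ] using
    h φ.1 φ.2

end Valid

end Soundness

theorem DerivM.valid {n : ℕ} {Γ Δ : Multiset (EFm S)} (d : DerivM FConv n Γ Δ)
    {η : ℕ → Srt → Den S} (hη : ∀ x s, SortedDen s (η x s)) : Valid η Γ Δ := by
  induction d generalizing η with
  | ax h => exact .ax (h.interp_eq hη)
  | cut h _ _ ih₁ ih₂ => exact .cut (h.interp_eq hη) (ih₁ hη) (ih₂ hη)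
  | contrL h₁ h₂ _ ih => exact .contrL (h₁.interp_eq hη) (h₂.interp_eq hη) (ih hη)
  | contrR h₁ h₂ _ ih => exact .contrR (h₁.interp_eq hη) (h₂.interp_eq hη) (ih hη)
  | weakL _ ih => exact .weakL (ih hη)
  | weakR _ ih => exact .weakR (ih hη)
  | impL h _ _ ih₁ ih₂ => exact .impL (h.interp_eq hη) (ih₁ hη) (ih₂ hη)
  | impR h _ ih => exact .impR (h.interp_eq hη) (ih hη)
  | conjL h _ ih => exact .conjL (h.interp_eq hη) (ih hη)
  | conjR h _ _ ih₁ ih₂ => exact .conjR (h.interp_eq hη) (ih₁ hη) (ih₂ hη)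
  | disjL h _ _ ih₁ ih₂ => exact .disjL (h.interp_eq hη) (ih₁ hη) (ih₂ hη)
  | disjR h _ ih => exact .disjR (h.interp_eq hη) (ih hη)
  | botL h => exact .botL (h.interp_eq hη)
  | allL hB hC ht _ ih =>
      exact .allL (sortedDen_eval hη (fun _ => (sortedDen_junkDen (.tm 0)).1) ht)
        (hB.interp_eq hη) ((hC.interp_eq hη).trans (interp_openF_of_hasSort ht _)) (ih hη)
  | exR hB hC ht _ ih =>
      exact .exR (sortedDen_eval hη (fun _ => (sortedDen_junkDen (.tm 0)).1) ht)
        (hB.interp_eq hη) ((hC.interp_eq hη).trans (interp_openF_of_hasSort ht _)) (ih hη)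
  | allR hB hΓ hΔ hA _ ih =>
      exact .allR (hB.interp_eq hη) hΓ hΔ hA fun _ hφ => ih (sortedDen_updateDen hη hφ)
  | exL hB hΓ hΔ hA _ ih =>
      exact .exL (hB.interp_eq hη) hΓ hΔ hA fun _ hφ => ih (sortedDen_updateDen hη hφ)

/-! ## Adequacy -/

def Tm.instFrom (ρ : ℕ → Tm S) : ℕ → Tm S → Tm S
  | m, .bvar j => if j < m then .bvar j else ρ (j - m)
  | _, .fvar x => .fvar x
  | m, .app f a => .app f fun i => Tm.instFrom ρ (m + (S.far f).get i) (a i)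

def Fm.instFrom (ρ : ℕ → Tm S) : ℕ → Fm S → Fm S
  | k, .atom P a => .atom P fun i => Tm.instFrom ρ (k + (S.par P).get i) (a i)
  | k, .imp A B => .imp (Fm.instFrom ρ k A) (Fm.instFrom ρ k B)
  | k, .conj A B => .conj (Fm.instFrom ρ k A) (Fm.instFrom ρ k B)
  | k, .disj A B => .disj (Fm.instFrom ρ k A) (Fm.instFrom ρ k B)
  | _, .bot => .bot
  | k, .all A => .all (Fm.instFrom ρ (k + 1) A)
  | k, .ex A => .ex (Fm.instFrom ρ (k + 1) A)

def Tm.scons (u : Tm S) (ρ : ℕ → Tm S) : ℕ → Tm S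
  | 0 => u
  | j + 1 => ρ j

theorem Tm.openT_of_WF (u t : Tm S) : ∀ d m, Tm.WF d t → d ≤ m → Tm.openT u m t = t := by
  induction t with
  | bvar j => intro d m (h : j < d) hdm; simp [Tm.openT, show j ≠ m by omega]
  | fvar => intros; rfl
  | app f a ih =>
      intro d m h hdm
      simp only [Tm.openT]
      congr 1
      funext i
      exact ih i _ _ (h i) (by omega)

theorem Tm.instFrom_of_WF (ρ : ℕ → Tm S) (t : Tm S) :
    ∀ m, Tm.WF m t → t.instFrom ρ m = t := by
  induction t with
  | bvar j => intro m (h : j < m); simp [Tm.instFrom, h]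
  | fvar => intros; rfl
  | app f a ih =>
      intro m h
      simp only [Tm.instFrom]
      congr 1
      funext i
      exact ih i _ (h i)

theorem Fm.instFrom_of_WF (ρ : ℕ → Tm S) (A : Fm S) :
    ∀ k, Fm.WF k A → A.instFrom ρ k = A := by
  induction A with
  | atom P a =>
      intro k h
      simp only [Fm.instFrom]
      congr 1
      funext i
      exact Tm.instFrom_of_WF ρ (a i) _ (h i)
  | imp A B ihA ihB | conj A B ihA ihB | disj A B ihA ihB =>
      intro k h; simp only [Fm.instFrom, ihA k h.1, ihB k h.2]
  | bot => intros; rfl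
  | all A ih | ex A ih => intro k h; simp only [Fm.instFrom, ih (k + 1) h]

theorem Tm.openT_instFrom {u : Tm S} {ρ : ℕ → Tm S} (hρ : ∀ j, Tm.WF 0 (ρ j)) (t : Tm S) :
    ∀ m, Tm.openT u m (t.instFrom ρ (m + 1)) = t.instFrom (Tm.scons u ρ) m := by
  induction t with
  | bvar j =>
      intro m
      rcases lt_trichotomy j m with h | rfl | h
      · simp [Tm.instFrom, Tm.openT, h, show j < m + 1 by omega, show j ≠ m by omega]
      · simp [Tm.instFrom, Tm.openT, Tm.scons]
      · rw [Tm.instFrom, if_neg (by omega), Tm.instFrom, if_neg (by omega),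
          Tm.openT_of_WF u _ 0 m (hρ _) (Nat.zero_le m), show j - m = (j - (m + 1)) + 1 by omega]
        rfl
  | fvar => intros; rfl
  | app f a ih =>
      intro m
      simp only [Tm.instFrom, Tm.openT]
      congr 1
      funext i
      rw [Nat.add_right_comm, ih i]

theorem Fm.openF_instFrom {u : Tm S} {ρ : ℕ → Tm S} (hρ : ∀ j, Tm.WF 0 (ρ j)) (A : Fm S) :
    ∀ k, Fm.openF u k (A.instFrom ρ (k + 1)) = A.instFrom (Tm.scons u ρ) k := by
  induction A with
  | atom P a =>
      intro k
      simp only [Fm.instFrom, Fm.openF]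
      congr 1
      funext i
      rw [Nat.add_right_comm, Tm.openT_instFrom hρ]
  | imp A B ihA ihB | conj A B ihA ihB | disj A B ihA ihB =>
      intro k; simp only [Fm.instFrom, Fm.openF, ihA, ihB]
  | bot => intros; rfl
  | all A ih | ex A ih => intro k; simp only [Fm.instFrom, Fm.openF, ih]

theorem Fm.finite_fv (A : Fm S) : A.fv.Finite := by
  have tm_finite (t : Tm S) : t.fv.Finite := by
    induction t with
    | bvar => exact Set.finite_empty
    | fvar x => exact Set.finite_singleton x
    | app f a ih => exact Set.finite_iUnion ih
  induction A with
  | atom P a => exact Set.finite_iUnion fun i => tm_finite (a i)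
  | imp _ _ ihA ihB | conj _ _ ihA ihB | disj _ _ ihA ihB => exact ihA.union ihB
  | bot => exact Set.finite_empty
  | all _ ih | ex _ ih => exact ih

theorem finite_mFv (Γ : Multiset (Fm S)) : (mFv Γ).Finite := by
  classical
  exact (Γ.toFinset.finite_toSet.biUnion fun A _ => A.finite_fv).subset
      fun x ⟨A, hA, hx⟩ => Set.mem_biUnion (Multiset.mem_toFinset.2 hA) hx

theorem exists_fresh (m : Phase S) (A : Fm S) :
    ∃ x, x ∉ mFv m.1 ∧ x ∉ mFv m.2 ∧ x ∉ A.fv := by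
  obtain ⟨x, hx⟩ := (((finite_mFv m.1).union (finite_mFv m.2)).union A.finite_fv).exists_notMem
  exact ⟨x, fun h => hx (.inl (.inl h)), fun h => hx (.inl (.inr h)), fun h => hx (.inr h)⟩

def Adequate (F : Fm S) (X : Set (Phase S)) : Prop := leftPhase F ∈ X ∧ rightPhase F ∈ orth X

namespace Adequate

theorem orth_orth_leftPhase (F : Fm S) : Adequate F (orth (orth {leftPhase F})) := by
  refine ⟨subset_orth_orth _ rfl, ?_⟩
  rw [orth_orth_orth]
  rintro _ rfl
  rw [add_rightPhase_mem_pole]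
  exact .ax F

theorem imp {A B : Fm S} {X Y : Set (Phase S)} (hA : Adequate A X) (hB : Adequate B Y) :
    Adequate (.imp A B) (impP X Y) := by
  refine ⟨?_, fun z hz => ?_⟩
  · rintro _ ⟨x, hx, y, hy, rfl⟩
    have dA := add_rightPhase_mem_pole.1 (hA.2 x hx)
    have dB := leftPhase_add_mem_pole.1 (hy _ hB.1)
    rw [add_comm, leftPhase_add_mem_pole]
    exact .impL
      (dA.mono (Multiset.le_add_right _ _) (Multiset.cons_le_cons _ (Multiset.le_add_right _ _)))
      (dB.mono (Multiset.cons_le_cons _ (Multiset.le_add_left _ _)) (Multiset.le_add_left _ _))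
  · have d := hz _ (Set.add_mem_add hA.1 hB.2)
    rw [add_rightPhase_mem_pole]
    refine .impR ?_
    simpa [leftPhase, rightPhase, pole, Multiset.singleton_add] using d

theorem conj {A B : Fm S} {X Y : Set (Phase S)} (hA : Adequate A X) (hB : Adequate B Y) :
    Adequate (.conj A B) (conjP X Y) := by
  refine ⟨fun z hz => ?_, ?_⟩
  · have d := hz _ (Set.add_mem_add hA.1 hB.1)
    rw [add_comm, leftPhase_add_mem_pole]
    refine .conjL ?_
    simpa [leftPhase, pole, Multiset.singleton_add] using d
  · rw [conjP, orth_orth_orth]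
    rintro _ ⟨x, hx, y, hy, rfl⟩
    have dA := add_rightPhase_mem_pole.1 (hA.2 x hx)
    have dB := add_rightPhase_mem_pole.1 (hB.2 y hy)
    rw [add_rightPhase_mem_pole]
    exact .conjR
      (dA.mono (Multiset.le_add_right _ _) (Multiset.cons_le_cons _ (Multiset.le_add_right _ _)))
      (dB.mono (Multiset.le_add_left _ _) (Multiset.cons_le_cons _ (Multiset.le_add_left _ _)))

theorem disj {A B : Fm S} {X Y : Set (Phase S)} (hA : Adequate A X) (hB : Adequate B Y) :
    Adequate (.disj A B) (disjP X Y) := by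
  refine ⟨?_, fun z hz => ?_⟩
  · rintro _ ⟨x, hx, y, hy, rfl⟩
    have dA := leftPhase_add_mem_pole.1 (hx _ hA.1)
    have dB := leftPhase_add_mem_pole.1 (hy _ hB.1)
    rw [add_comm, leftPhase_add_mem_pole]
    exact .disjL
      (dA.mono (Multiset.cons_le_cons _ (Multiset.le_add_right _ _)) (Multiset.le_add_right _ _))
      (dB.mono (Multiset.cons_le_cons _ (Multiset.le_add_left _ _)) (Multiset.le_add_left _ _))
  · have d := hz _ (Set.add_mem_add hA.2 hB.2)
    rw [add_rightPhase_mem_pole]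
    refine .disjR ?_
    simpa [rightPhase, pole, Multiset.singleton_add] using d

theorem all {ι : Type*} {A : Fm S} {X : ι → Set (Phase S)} (hX : ∀ i, IsFact (X i))
    {t : ι → Tm S} (ht : ∀ i, Tm.WF 0 (t i)) (hA : ∀ i, Adequate (Fm.openF (t i) 0 A) (X i))
    (hvar : ∀ x, ∃ i, t i = .fvar x) : Adequate (.all A) (⋂ i, X i) := by
  refine ⟨Set.mem_iInter.2 fun i => hX i fun n hn => ?_, fun y hy => ?_⟩
  · rw [add_comm, leftPhase_add_mem_pole]
    exact .allL (ht i) (leftPhase_add_mem_pole.1 (hn _ (hA i).1))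
  · obtain ⟨x, hxΓ, hxΔ, hxA⟩ := exists_fresh y A
    obtain ⟨i, hi⟩ := hvar x
    have d := add_rightPhase_mem_pole.1 ((hA i).2 y (Set.mem_iInter.1 hy i))
    rw [hi] at d
    exact add_rightPhase_mem_pole.2 (.allR hxΓ hxΔ hxA d)

theorem ex {ι : Type*} {A : Fm S} {X : ι → Set (Phase S)}
    {t : ι → Tm S} (ht : ∀ i, Tm.WF 0 (t i)) (hA : ∀ i, Adequate (Fm.openF (t i) 0 A) (X i))
    (hvar : ∀ x, ∃ i, t i = .fvar x) : Adequate (.ex A) (orth (orth (⋃ i, X i))) := by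
  refine ⟨fun n hn => ?_, ?_⟩
  · obtain ⟨x, hxΓ, hxΔ, hxA⟩ := exists_fresh n A
    obtain ⟨i, hi⟩ := hvar x
    have d := leftPhase_add_mem_pole.1 (hn _ (Set.mem_iUnion.2 ⟨i, (hA i).1⟩))
    rw [hi] at d
    rw [add_comm, leftPhase_add_mem_pole]
    exact .exL hxΓ hxΔ hxA d
  · rw [orth_orth_orth, orth_iUnion]
    refine Set.mem_iInter.2 fun i y hy => ?_
    exact add_rightPhase_mem_pole.2 (.exR (ht i) (add_rightPhase_mem_pole.1 ((hA i).2 y hy)))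

end Adequate

def selfDen (x : ℕ) (_ : Srt) : Den S := fun _ => .const (.fvar x)

theorem sortedDen_selfDen (x : ℕ) (s : Srt) : SortedDen s (selfDen x s : Den S) :=
  sortedDen_const (U := .fvar x) trivial s

def denHeads (L : List (Den S)) (k : ℕ) : Tm S := denHead (qEnv L k)

theorem denHeads_cons (φ : Den S) (L : List (Den S)) :
    denHeads (φ :: L) = Tm.scons (denHead φ) (denHeads L) := by
  funext k
  cases k <;> simp [denHeads, qEnv, Tm.scons]

theorem decode_Ft {L : List (Den S)} (hL : ∀ φ ∈ L, SortedDen (.tm 0) φ) (t : Tm S) :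
    ∀ p, (Ft S p t).decode selfDen L = t.instFrom (denHeads L) p := by
  induction t with
  | bvar i =>
      intro p
      by_cases hip : i < p
      · simp [Ft, hip, ETm.decode, ETm.eval, Val.head, Val.component, Val.bvars, Tm.instFrom]
      · have hhead v := (sortedDen_qEnv hL (i - p)).head_eq v
        by_cases hp : p = 0
        · subst hp
          simp only [Nat.sub_zero] at hhead
          simp [Ft, hip, ETm.decode, ETm.eval, hhead, Tm.instFrom, denHeads]
        · simp [Ft, hip, hp, ETm.decode, ETm.eval, hhead, Tm.instFrom, denHeads]
  | fvar x =>
      intro p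
      by_cases hp : p = 0 <;>
        simp [Ft, hp, ETm.decode, ETm.eval, selfDen, Val.head, Val.const, Tm.instFrom]
  | app f a ih =>
      intro p
      simp only [ETm.decode] at ih
      simp only [Ft, ETm.decode, ETm.eval, Val.lift_bvars, Val.head_const, Tm.instFrom, ih]

theorem adequate_Ff (A : Fm S) : ∀ L : List (Den S), (∀ φ ∈ L, SortedDen (.tm 0) φ) →
    Adequate (A.instFrom (denHeads L) 0) ((Ff S A).interp selfDen L) := by
  have hvar (x : ℕ) : ∃ φ : {φ : Den S // SortedDen (.tm 0) φ}, denHead φ.1 = .fvar x :=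
    ⟨⟨selfDen x (.tm 0), sortedDen_selfDen x _⟩, by simp [denHead, selfDen]⟩
  induction A with
  | atom P a =>
      intro L hL
      simpa [Fm.instFrom, Ff, EFm.interp, decode_Ft hL] using
        Adequate.orth_orth_leftPhase
          (.atom P fun i => (a i).instFrom (denHeads L) ((S.par P).get i))
  | imp _ _ ihA ihB => intro L hL; exact (ihA L hL).imp (ihB L hL)
  | conj _ _ ihA ihB => intro L hL; exact (ihA L hL).conj (ihB L hL)
  | disj _ _ ihA ihB => intro L hL; exact (ihA L hL).disj (ihB L hL)
  | bot => intro L _; exact Adequate.orth_orth_leftPhase .bot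
  | all A ih =>
      intro L hL
      refine Adequate.all (fun _ => EFm.isFact_interp _ _) (fun φ => φ.2.wf_denHead)
        (fun φ => ?_) hvar
      rw [Fm.openF_instFrom (ρ := denHeads L) (fun j => (sortedDen_qEnv hL j).wf_denHead),
        ← denHeads_cons]
      exact ih _ (List.forall_mem_cons.2 ⟨φ.2, hL⟩)
  | ex A ih =>
      intro L hL
      refine Adequate.ex (fun φ => φ.2.wf_denHead) (fun φ => ?_) hvar
      rw [Fm.openF_instFrom (ρ := denHeads L) (fun j => (sortedDen_qEnv hL j).wf_denHead),
        ← denHeads_cons]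
      exact ih _ (List.forall_mem_cons.2 ⟨φ.2, hL⟩)

theorem sum_map_leftPhase (Γ : Multiset (Fm S)) : (Γ.map leftPhase).sum = (Γ, 0) := by
  induction Γ using Multiset.induction_on with
  | empty => rfl
  | cons A Γ ih => simp [ih, leftPhase, Multiset.singleton_add]

theorem sum_map_rightPhase (Δ : Multiset (Fm S)) : (Δ.map rightPhase).sum = (0, Δ) := by
  induction Δ using Multiset.induction_on with
  | empty => rfl
  | cons B Δ ih => simp [ih, rightPhase, Multiset.singleton_add]

theorem Deriv.of_precook {Γ Δ : Multiset (Fm S)} (hΓ : ∀ A ∈ Γ, Fm.WF 0 A)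
    (hΔ : ∀ B ∈ Δ, Fm.WF 0 B) (h : DerivMod FConv (Γ.map (Ff S)) (Δ.map (Ff S))) :
    Deriv S Γ Δ := by
  obtain ⟨n, d⟩ := h
  have adequate {A : Fm S} (hA : Fm.WF 0 A) : Adequate A ((Ff S A).interp selfDen []) := by
    simpa [Fm.instFrom_of_WF _ A 0 hA] using adequate_Ff A [] (by simp)
  have hΓ' : ((Γ, 0) : Phase S) ∈ ((Γ.map (Ff S)).map fun A => A.interp selfDen []).sum := by
    rw [← sum_map_leftPhase, Multiset.map_map]
    exact Set.multiset_sum_mem_multiset_sum _ _ _ fun A hA => (adequate (hΓ A hA)).1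
  have hΔ' :
      ((0, Δ) : Phase S) ∈ ((Δ.map (Ff S)).map fun B => orth (B.interp selfDen [])).sum := by
    rw [← sum_map_rightPhase, Multiset.map_map]
    exact Set.multiset_sum_mem_multiset_sum _ _ _ fun B hB => (adequate (hΔ B hB)).2
  simpa [pole] using d.valid sortedDen_selfDen (Set.add_mem_add hΓ' hΔ')

/-- **Theorem (translation).**  A sequent `Γ ⊢ Δ` is provable in the sequent calculus
of binding logic if and only if the pre-cooked sequent `Γ' ⊢ Δ'` is provable in
sequent calculus modulo the congruence generated by the rewrite system `σ`. -/
theorem precooking_preserves_provability (S : BSig) (Γ Δ : Multiset (Fm S))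
    (hΓ : ∀ A ∈ Γ, Fm.WF 0 A) (hΔ : ∀ B ∈ Δ, Fm.WF 0 B) :
    Deriv S Γ Δ ↔ DerivMod FConv (Γ.map (Ff S)) (Δ.map (Ff S)) :=
  ⟨Deriv.precook, Deriv.of_precook hΓ hΔ⟩
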